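/- arXiv:1707.01575 — 6 statements merged into one kernel-verified Lean document; each statement's English description precedes it below -/
import Mathlib

section
/- Let θ ∈ 𝓡 ∩ (0, 1/2) be purely periodic for the doubling map with minimal period p (D^p(θ) = θ), write θ = Σ_{k≥1} s_k 2^{−k} with (s_k) periodic of period p, and let θ' := Σ_{k≥1} u_k 2^{−k} be its period doubling, where (u_k) is periodic with period 2p, u_k = s_k for 1 ≤ k ≤ p and u_{p+k} = 1 − s_k for 1 ≤ k ≤ p. Then the kneading series satisfy the identity P_{θ'}(t)·(1 + t^p) = P_θ(t)·(1 − t^p) for every complex t with |t| < 1. -/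
open scoped Topology

noncomputable section

/-- The doubling map `D(x) = 2x mod 1`. -/
def D (x : ℝ) : ℝ := Int.fract (2 * x)

/-- The set of real kneading angles. -/
def 𝓡 : Set ℝ := {θ : ℝ | θ ∈ Set.Icc 0 (1/2) ∧ ∀ n : ℕ, D^[n] θ ∉ Set.Ioo θ (1 - θ)}

/-- The `(k+1)`-st digit of the non-terminating binary expansion of `x ∈ (0,1]`. -/
def dig (x : ℝ) (k : ℕ) : ℤ := ⌈(2:ℝ) ^ (k+1) * x⌉ - 2 * ⌈(2:ℝ) ^ k * x⌉ + 1

/-- The kneading series of `θ` at a complex argument `t`: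
`P_θ(t) = 1 + ∑_{k ≥ 1} (-1)^{θ_k} t^k`, where `(θ_k)` is the non-terminating
binary digit sequence of `2θ`. -/
def Pc (θ : ℝ) (t : ℂ) : ℂ := 1 + ∑' k : ℕ, (-1 : ℂ) ^ (dig (2*θ) k) * t ^ (k+1)

/-- The kneading series of `θ` at a real argument. -/
def Pr (θ : ℝ) (t : ℝ) : ℝ := 1 + ∑' k : ℕ, (-1 : ℝ) ^ (dig (2*θ) k) * t ^ (k+1)

/-- The smallest positive real root of the kneading series (or `1` if none). -/
def rr (θ : ℝ) : ℝ := sInf ({t : ℝ | t ∈ Set.Ioo (0:ℝ) 1 ∧ Pr θ t = 0} ∪ {1})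

/-- The entropy `h(θ) = -log r(θ)`, with `h(0) = 0`. -/
def ent (θ : ℝ) : ℝ := if θ = 0 then 0 else -Real.log (rr θ)

/-- The extended entropy `H(θ) = sup {h(θ') : θ' ∈ 𝓡, θ' ≤ θ}`. -/
def Hext (θ : ℝ) : ℝ := sSup (ent '' {x | x ∈ 𝓡 ∧ x ≤ θ})

/-- `s` is the non-terminating binary expansion of `x` (digit `k+1` is `s k`). -/
def IsBinExp (x : ℝ) (s : ℕ → ℕ) : Prop :=
  (∀ k, s k ≤ 1) ∧ (∀ N, ∃ k, N ≤ k ∧ s k = 1) ∧ x = ∑' k : ℕ, (s k : ℝ) / 2 ^ (k+1)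

/-- `f` is locally Hölder continuous of exponent `η` at `z`, within the domain `I`. -/
def HolderAt (f : ℝ → ℝ) (I : Set ℝ) (z η : ℝ) : Prop :=
  ∃ ε > (0:ℝ), ∃ C : ℝ,
    ∀ x ∈ I, ∀ y ∈ I, |x - z| < ε → |y - z| < ε → |f x - f y| ≤ C * |x - y| ^ η

/-- The local Hölder exponent of `f` at `z`, within the domain `I`. -/
def holderExp (f : ℝ → ℝ) (I : Set ℝ) (z : ℝ) : ℝ :=
  sSup {η : ℝ | 0 < η ∧ HolderAt f I z η}

/-- `(a,b)` is a plateau of `g`, viewed as a function with domain `[0,1/2]`. -/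
def IsPlateau (g : ℝ → ℝ) (a b : ℝ) : Prop :=
  a < b ∧ ∀ x ∈ Set.Ioo a b ∩ Set.Icc (0:ℝ) (1/2),
    ∀ y ∈ Set.Ioo a b ∩ Set.Icc (0:ℝ) (1/2), g x = g y

/-- `θ` does not lie in any plateau of `g`. -/
def NotInPlateau (g : ℝ → ℝ) (θ : ℝ) : Prop :=
  ¬ ∃ a b : ℝ, IsPlateau g a b ∧ θ ∈ Set.Ioo a b

/-- The Thue–Morse sequence: parity of the number of 1's in the binary expansion. -/
def tm (m : ℕ) : ℕ := (Nat.digits 2 m).sum % 2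

/-- The Feigenbaum angle `θ⋆ = ∑_{k ≥ 1} t_{k-1} 2^{-k}`. -/
def thetaStar : ℝ := ∑' k : ℕ, (tm k : ℝ) / 2 ^ (k+1)

/-- The survivor set of the doubling map with hole `(θ, 1-θ)`. -/
def K (θ : ℝ) : Set ℝ := {x : ℝ | x ∈ Set.Ico (0:ℝ) 1 ∧ ∀ n : ℕ, D^[n] x ∉ Set.Ioo θ (1 - θ)}

/-- Digits of the angle `θ_n`: the Thue–Morse prefix of length `2^n` followed by the
periodic repetition of its digit-wise complement. -/
def tipDig (n k : ℕ) : ℕ := if k < 2 ^ n then tm k else 1 - tm (k % 2 ^ n)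

/-- The angle `θ_n` landing at the tip of the `n`-fold period doubling copy. -/
def tip (n : ℕ) : ℝ := ∑' k : ℕ, (tipDig n k : ℝ) / 2 ^ (k+1)

lemma summable_digits (s : ℕ → ℕ) (hb : ∀ k, s k ≤ 1) :
    Summable (fun k => (s k : ℝ) / 2 ^ (k+1)) := by
  refine Summable.of_nonneg_of_le (fun k => by positivity) (fun k => ?_)
    (((summable_geometric_of_lt_one (by norm_num) (by norm_num : (1/2:ℝ) < 1))).mul_left (1/2))
  have h1 : (s k : ℝ) ≤ 1 := by exact_mod_cast hb k
  have h2 : (1/2 : ℝ) * (1/2)^k = 1 / 2^(k+1) := by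
    rw [← pow_succ', div_pow, one_pow]
  rw [h2]
  gcongr

lemma tail_pos (s : ℕ → ℕ) (hb : ∀ k, s k ≤ 1) (hi : ∀ N, ∃ k, N ≤ k ∧ s k = 1) (k : ℕ) :
    0 < ∑' j : ℕ, (s (j+k) : ℝ) / 2 ^ (j+1) := by
  obtain ⟨m, hm, hm1⟩ := hi k
  refine Summable.tsum_pos (summable_digits (fun j => s (j+k)) (fun j => hb _))
    (fun j => by positivity) (m - k) ?_
  have h : m - k + k = m := by omega
  simp only [h, hm1]
  positivity

lemma tail_le (s : ℕ → ℕ) (hb : ∀ k, s k ≤ 1) (k : ℕ) :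
    ∑' j : ℕ, (s (j+k) : ℝ) / 2 ^ (j+1) ≤ 1 := by
  have h2 : Summable (fun j : ℕ => (1:ℝ) / 2 ^ (j+1)) := by
    have := summable_digits (fun _ => 1) (fun _ => le_refl 1)
    simpa using this
  have hle := Summable.tsum_le_tsum (f := fun j : ℕ => (s (j+k) : ℝ) / 2 ^ (j+1))
    (g := fun j : ℕ => (1:ℝ) / 2 ^ (j+1)) (fun j => by
      have h4 : (s (j+k) : ℝ) ≤ 1 := by exact_mod_cast hb (j+k)
      show (s (j+k) : ℝ) / 2 ^ (j+1) ≤ (1:ℝ) / 2 ^ (j+1)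
      gcongr)
    (summable_digits (fun j => s (j+k)) (fun j => hb _)) h2
  refine hle.trans ?_
  have h3 : ∑' j : ℕ, (1:ℝ) / 2 ^ (j+1) = (1/2) * ∑' j : ℕ, (1/2:ℝ)^j := by
    rw [← tsum_mul_left]
    congr 1; funext j
    rw [← pow_succ', div_pow, one_pow]
  rw [h3, tsum_geometric_of_lt_one (by norm_num) (by norm_num)]
  norm_num

lemma ceil_binExp (x : ℝ) (s : ℕ → ℕ) (h : IsBinExp x s) (k : ℕ) :
    ⌈(2:ℝ)^k * x⌉ = (∑ j ∈ Finset.range k, (s j : ℤ) * 2^(k-1-j)) + 1 := by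
  obtain ⟨hb, hi, hx⟩ := h
  have hsum := summable_digits s hb
  have hsplit := Summable.sum_add_tsum_nat_add (f := fun j => (2:ℝ)^k * ((s j : ℝ) / 2 ^ (j+1))) k
    (hsum.mul_left _)
  have hxk : (2:ℝ)^k * x = ∑' j : ℕ, (2:ℝ)^k * ((s j : ℝ) / 2 ^ (j+1)) := by
    rw [hx, tsum_mul_left]
  rw [hxk, ← hsplit]
  have hA : ∀ j ∈ Finset.range k, (2:ℝ)^k * ((s j : ℝ) / 2 ^ (j+1))
      = ((s j : ℤ) * 2^(k-1-j) : ℤ) := by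
    intro j hj
    have hj' : j < k := Finset.mem_range.mp hj
    have he : (2:ℝ)^k = 2^(j+1) * 2^(k-1-j) := by
      rw [← pow_add]; congr 1; omega
    rw [he]
    push_cast
    field_simp
  rw [Finset.sum_congr rfl hA, ← Int.cast_sum]
  have hB : (fun j : ℕ => (2:ℝ)^k * ((s (j+k) : ℝ) / 2 ^ (j+k+1)))
      = fun j : ℕ => (s (j+k) : ℝ) / 2 ^ (j+1) := by
    funext j
    have he : (2:ℝ)^(j+k+1) = 2^(j+1) * 2^k := by rw [← pow_add]; congr 1; omega
    rw [he]
    field_simp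
  rw [hB, add_comm, Int.ceil_add_intCast]
  have hc : ⌈∑' j : ℕ, (s (j+k) : ℝ) / 2 ^ (j+1)⌉ = 1 := by
    have h0 := tail_pos s hb hi k
    have h1 := tail_le s hb k
    have hle : ⌈∑' j : ℕ, (s (j+k) : ℝ) / 2 ^ (j+1)⌉ ≤ 1 :=
      Int.ceil_le.mpr (by exact_mod_cast h1)
    have hlt : (0:ℤ) < ⌈∑' j : ℕ, (s (j+k) : ℝ) / 2 ^ (j+1)⌉ :=
      Int.lt_ceil.mpr (by exact_mod_cast h0)
    omega
  rw [hc]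
  ring

lemma dig_binExp (x : ℝ) (s : ℕ → ℕ) (h : IsBinExp x s) (k : ℕ) :
    dig x k = s k := by
  unfold dig
  rw [ceil_binExp x s h k, ceil_binExp x s h (k+1), Finset.sum_range_succ]
  have he : ∀ j ∈ Finset.range k, (s j : ℤ) * 2^(k+1-1-j) = 2 * ((s j : ℤ) * 2^(k-1-j)) := by
    intro j hj
    have hj' : j < k := Finset.mem_range.mp hj
    have : k+1-1-j = (k-1-j) + 1 := by omega
    rw [this, pow_succ]
    ring
  rw [Finset.sum_congr rfl he, ← Finset.mul_sum]
  have : k + 1 - 1 - k = 0 := by omega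
  rw [this]
  ring

lemma binExp_double (x : ℝ) (s : ℕ → ℕ) (h : IsBinExp x s) (h0 : s 0 = 0) :
    IsBinExp (2*x) (fun k => s (k+1)) := by
  obtain ⟨hb, hi, hx⟩ := h
  refine ⟨fun k => hb _, fun N => ?_, ?_⟩
  · obtain ⟨m, hm, hm1⟩ := hi (N+1)
    refine ⟨m - 1, by omega, ?_⟩
    show s (m - 1 + 1) = 1
    have hm' : m - 1 + 1 = m := by omega
    rw [hm', hm1]
  · have hsum := summable_digits s hb
    rw [hx, Summable.tsum_eq_zero_add hsum, h0]
    simp only [Nat.cast_zero, zero_div, zero_add]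
    rw [← tsum_mul_left]
    congr 1; funext k
    show 2 * ((s (k+1) : ℝ) / 2 ^ (k+1+1)) = (s (k+1) : ℝ) / 2 ^ (k+1)
    rw [pow_succ]
    field_simp


/-- the kneading series of an angle and of its period doubling satisfy
`P_{θ'}(t)(1 + t^p) = P_θ(t)(1 - t^p)` on the open unit disk. -/
theorem period_doubling_kneading_identity (θ : ℝ) (hθ : θ ∈ 𝓡 ∩ Set.Ioo 0 (1/2 : ℝ))
    (p : ℕ) (hp : 1 ≤ p) (hper : D^[p] θ = θ) (hmin : ∀ k, 0 < k → k < p → D^[k] θ ≠ θ)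
    (s u : ℕ → ℕ) (hs : IsBinExp θ s) (hsper : ∀ k, s (k + p) = s k)
    (hu1 : ∀ k < p, u k = s k) (hu2 : ∀ k < p, u (p + k) = 1 - s k)
    (huper : ∀ k, u (k + 2 * p) = u k) :
    ∀ t : ℂ, ‖t‖ < 1 →
      Pc (∑' k : ℕ, (u k : ℝ) / 2 ^ (k+1)) t * (1 + t ^ p) = Pc θ t * (1 - t ^ p) := by
  unfold Pc
  -- s 0 = 0
  have hsum := summable_digits s hs.1
  have s0 : s 0 = 0 := by
    by_contra hne
    have h1 : s 0 = 1 := by have := hs.1 0; omega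
    have htail : 0 ≤ ∑' k : ℕ, (s (k+1) : ℝ) / 2 ^ (k+1+1) :=
      tsum_nonneg (fun k => by positivity)
    have : (1:ℝ)/2 ≤ θ := by
      rw [hs.2.2, Summable.tsum_eq_zero_add hsum, h1]
      push_cast
      linarith
    linarith [hθ.2.2]
  have ub : ∀ k, u k ≤ 1 := by
    intro k
    induction k using Nat.strong_induction_on with
    | _ k ih =>
      rcases lt_or_ge k p with h | h
      · rw [hu1 k h]; exact hs.1 k
      · rcases lt_or_ge k (2*p) with h2 | h2
        · have hk : k = p + (k - p) := by omega
          rw [hk, hu2 (k-p) (by omega)]; omega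
        · have hk : k = (k - 2*p) + 2*p := by omega
          rw [hk, huper]; exact ih _ (by omega)
  have up : ∀ k, u (k+p) = 1 - u k := by
    intro k
    induction k using Nat.strong_induction_on with
    | _ k ih =>
      rcases lt_or_ge k p with h | h
      · rw [add_comm, hu2 k h, hu1 k h]
      · have hk : k + p = (k - p) + 2*p := by omega
        rw [hk, huper]
        have h2 := ih (k - p) (by omega)
        have h3 : k - p + p = k := by omega
        rw [h3] at h2
        have := ub (k - p)
        omega
  have u0 : u 0 = 0 := by rw [hu1 0 hp]; exact s0
  have huBin : IsBinExp (∑' k : ℕ, (u k : ℝ) / 2 ^ (k+1)) u := by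
    refine ⟨ub, fun N => ?_, rfl⟩
    rcases Nat.lt_or_ge (u N) 1 with h | h
    · exact ⟨N + p, by omega, by rw [up N]; omega⟩
    · exact ⟨N, le_refl N, by have := ub N; omega⟩
  have digs : ∀ k, dig (2*θ) k = (s (k+1) : ℤ) :=
    fun k => dig_binExp _ _ (binExp_double θ s hs s0) k
  have digu : ∀ k, dig (2*(∑' k : ℕ, (u k : ℝ) / 2 ^ (k+1))) k = (u (k+1) : ℤ) :=
    fun k => dig_binExp _ _ (binExp_double _ u huBin u0) k
  intro t ht
  set F : ℕ → ℂ := fun k => (-1) ^ (s k) * t ^ k with hFdef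
  set G : ℕ → ℂ := fun k => (-1) ^ (u k) * t ^ k with hGdef
  have hnorm : ∀ (v : ℕ → ℕ) (k : ℕ), ‖(-1:ℂ) ^ (v k) * t ^ k‖ = ‖t‖ ^ k := by
    intro v k
    rw [norm_mul, norm_pow, norm_pow, norm_neg, norm_one, one_pow, one_mul]
  have hF : Summable F := by
    apply Summable.of_norm
    simp only [hFdef, hnorm s]
    exact summable_geometric_of_lt_one (norm_nonneg t) ht
  have hG : Summable G := by
    apply Summable.of_norm
    simp only [hGdef, hnorm u]
    exact summable_geometric_of_lt_one (norm_nonneg t) ht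
  have hPF : (1 : ℂ) + ∑' k : ℕ, (-1 : ℂ) ^ (dig (2*θ) k) * t ^ (k+1) = ∑' k, F k := by
    rw [Summable.tsum_eq_zero_add hF]
    congr 1
    · simp [hFdef, s0]
    · apply tsum_congr; intro k
      rw [digs k, zpow_natCast]
  have hPG : (1 : ℂ) + ∑' k : ℕ, (-1 : ℂ) ^ (dig (2*(∑' k : ℕ, (u k : ℝ) / 2 ^ (k+1))) k) * t ^ (k+1)
      = ∑' k, G k := by
    rw [Summable.tsum_eq_zero_add hG]
    congr 1
    · simp [hGdef, u0]
    · apply tsum_congr; intro k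
      rw [digu k, zpow_natCast]
  have hFs : ∀ k, F (k+p) = F k * t ^ p := by
    intro k
    simp only [hFdef]
    rw [hsper k, pow_add]
    ring
  have hGs : ∀ k, G (k+p) = -(G k * t ^ p) := by
    intro k
    simp only [hGdef]
    rw [up k, pow_add]
    rcases Nat.le_one_iff_eq_zero_or_eq_one.mp (ub k) with h | h <;> rw [h] <;> norm_num
  have h1F : ∑' k, F (k+p) = ∑' k, F k - ∑ k ∈ Finset.range p, F k := by
    rw [← Summable.sum_add_tsum_nat_add p hF]; ring
  have h1G : ∑' k, G (k+p) = ∑' k, G k - ∑ k ∈ Finset.range p, G k := by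
    rw [← Summable.sum_add_tsum_nat_add p hG]; ring
  have hFmul : (∑' k, F k) * t ^ p = ∑' k, F (k+p) := by
    rw [← tsum_mul_right]
    exact tsum_congr fun k => (hFs k).symm
  have hGmul : (∑' k, G k) * t ^ p = -∑' k, G (k+p) := by
    rw [← tsum_mul_right, ← tsum_neg]
    exact tsum_congr fun k => by rw [hGs k, neg_neg]
  rw [hPF, hPG]
  have e1 : (∑' k, G k) * (1 + t ^ p) = ∑ k ∈ Finset.range p, G k := by
    rw [mul_add, mul_one, hGmul, h1G]; ring
  have e2 : (∑' k, F k) * (1 - t ^ p) = ∑ k ∈ Finset.range p, F k := by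
    rw [mul_sub, mul_one, hFmul, h1F]; ring
  rw [e1, e2]
  exact Finset.sum_congr rfl fun k hk => by
    simp only [hFdef, hGdef, hu1 k (Finset.mem_range.mp hk)]


end
end

section
/- Let θ, θ' ∈ 𝓡 with 0 < θ' < θ ≤ 1/2, let (s_k) and (s'_k) be the non-terminating binary expansions of θ and θ' respectively, and let n := min{k ≥ 1 : s_k ≠ s'_k}. Then c·2^{−n} ≤ θ − θ' ≤ 2^{−n+1}, where c = 2(1 − 2θ) if θ < 1/2 and c = 1 if θ = 1/2. -/
open scoped Topology

noncomputable section

/-- tail sum of binary digits from index `j`. -/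
def tl (s : ℕ → ℕ) (j : ℕ) : ℝ := ∑' k : ℕ, (s (j+k) : ℝ) / 2 ^ (k+1)

lemma tl_summable (s : ℕ → ℕ) (hs : ∀ k, s k ≤ 1) (j : ℕ) :
    Summable (fun k : ℕ => (s (j+k) : ℝ) / 2 ^ (k+1)) := by
  refine Summable.of_nonneg_of_le (fun k => by positivity) (fun k => ?_)
    (summable_geometric_two' 1)
  have h1 : (s (j+k) : ℝ) ≤ 1 := by exact_mod_cast hs (j+k)
  calc (s (j+k):ℝ) / 2 ^ (k+1) ≤ 1 / 2 ^ (k+1) := by gcongr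
    _ = 1 / 2 / 2 ^ k := by rw [pow_succ]; ring

lemma tl_le_one (s : ℕ → ℕ) (hs : ∀ k, s k ≤ 1) (j : ℕ) : tl s j ≤ 1 := by
  have h := tsum_geometric_two' (1:ℝ)
  calc tl s j ≤ ∑' k : ℕ, (1:ℝ) / 2 / 2 ^ k := by
        refine Summable.tsum_le_tsum (fun k => ?_) (tl_summable s hs j) (summable_geometric_two' 1)
        have h1 : (s (j+k) : ℝ) ≤ 1 := by exact_mod_cast hs (j+k)
        calc (s (j+k):ℝ) / 2 ^ (k+1) ≤ 1 / 2 ^ (k+1) := by gcongr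
          _ = 1 / 2 / 2 ^ k := by rw [pow_succ]; ring
    _ = 1 := h

lemma tl_nonneg (s : ℕ → ℕ) (j : ℕ) : 0 ≤ tl s j :=
  tsum_nonneg fun k => by positivity

lemma tl_pos (s : ℕ → ℕ) (hs : ∀ k, s k ≤ 1) (hi : ∀ N, ∃ k, N ≤ k ∧ s k = 1)
    (j : ℕ) : 0 < tl s j := by
  obtain ⟨k, hk, hk1⟩ := hi j
  refine Summable.tsum_pos (tl_summable s hs j) (fun k => by positivity) (k - j) ?_
  have : j + (k - j) = k := by omega
  rw [this, hk1]
  norm_num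

lemma tl_step (s : ℕ → ℕ) (hs : ∀ k, s k ≤ 1) (j : ℕ) :
    tl s j = (s j : ℝ) / 2 + tl s (j+1) / 2 := by
  rw [tl, Summable.tsum_eq_zero_add (tl_summable s hs j)]
  have h1 : ∀ k : ℕ, (s (j+(k+1)) : ℝ) / 2 ^ (k+1+1) = (s (j+1+k) : ℝ) / 2 ^ (k+1) * (2⁻¹) := by
    intro k
    have : j + (k+1) = j + 1 + k := by omega
    rw [this, pow_succ]
    ring
  simp only [h1]
  rw [tsum_mul_right]
  simp [tl]
  ring

lemma tl_one_succ (s : ℕ → ℕ) (hs : ∀ k, s k ≤ 1) (j : ℕ) (h : tl s j = 1) :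
    tl s (j+1) = 1 := by
  have h1 := tl_step s hs j
  have h2 := tl_le_one s hs (j+1)
  have h3 : (s j : ℝ) ≤ 1 := by exact_mod_cast hs j
  linarith

lemma tl_lt_one_of_succ (s : ℕ → ℕ) (hs : ∀ k, s k ≤ 1) (j : ℕ)
    (h : tl s (j+1) < 1) : tl s j < 1 := by
  rcases lt_or_eq_of_le (tl_le_one s hs j) with h' | h'
  · exact h'
  · exact absurd (tl_one_succ s hs j h') (ne_of_lt h)

lemma D_iter (s : ℕ → ℕ) (hs : ∀ k, s k ≤ 1) :
    ∀ m : ℕ, tl s m < 1 → D^[m] (tl s 0) = tl s m := by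
  intro m
  induction m with
  | zero => intro _; rfl
  | succ n ih =>
    intro h
    have hn : tl s n < 1 := tl_lt_one_of_succ s hs n h
    rw [Function.iterate_succ_apply', ih hn, D, tl_step s hs n]
    have : 2 * ((s n : ℝ) / 2 + tl s (n+1) / 2) = (s n : ℝ) + tl s (n+1) := by ring
    rw [this, Int.fract_natCast_add, Int.fract_eq_self.mpr ⟨tl_nonneg s (n+1), h⟩]

lemma tl_prefix (s : ℕ → ℕ) (hs : ∀ k, s k ≤ 1) (m : ℕ) :
    tl s 0 = (∑ k ∈ Finset.range m, (s k : ℝ) / 2 ^ (k+1)) + tl s m / 2 ^ m := by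
  induction m with
  | zero => simp
  | succ n ih =>
    rw [ih, Finset.sum_range_succ, tl_step s hs n, pow_succ]
    ring

/-- distance estimate for two real angles in terms of the first index
where their binary expansions differ.  Here `m` is the 0-based index of the first
differing digit, so that `n = m + 1` in the paper's notation. -/
theorem angle_distance_estimate (θ θ' : ℝ) (hθ : θ ∈ 𝓡) (hθ' : θ' ∈ 𝓡)
    (h0 : 0 < θ') (h1 : θ' < θ) (h2 : θ ≤ 1/2)
    (s s' : ℕ → ℕ) (hs : IsBinExp θ s) (hs' : IsBinExp θ' s')
    (m : ℕ) (hm : s m ≠ s' m) (hmin : ∀ k < m, s k = s' k) :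
    (if θ = 1/2 then (1:ℝ) else 2 * (1 - 2 * θ)) / 2 ^ (m+1) ≤ θ - θ' ∧
      θ - θ' ≤ 1 / 2 ^ m := by
  obtain ⟨hsle, hsinf, hsum⟩ := hs
  obtain ⟨hsle', hsinf', hsum'⟩ := hs'
  have htl0 : ∀ t : ℕ → ℕ, tl t 0 = ∑' k : ℕ, (t k : ℝ) / 2 ^ (k+1) := by
    intro t; simp [tl]
  have hθeq : θ = tl s 0 := by rw [htl0]; exact hsum
  have hθ'eq : θ' = tl s' 0 := by rw [htl0]; exact hsum'
  set T := tl s (m+1) with hT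
  set T' := tl s' (m+1) with hT'
  have hT1 : 0 < T := tl_pos s hsle hsinf (m+1)
  have hT2 : T ≤ 1 := tl_le_one s hsle (m+1)
  have hT1' : 0 < T' := tl_pos s' hsle' hsinf' (m+1)
  have hT2' : T' ≤ 1 := tl_le_one s' hsle' (m+1)
  have hpow : (0:ℝ) < 2 ^ (m+1) := by positivity
  -- decomposition
  have hpre : (∑ k ∈ Finset.range m, (s k : ℝ) / 2 ^ (k+1))
      = ∑ k ∈ Finset.range m, (s' k : ℝ) / 2 ^ (k+1) := by
    refine Finset.sum_congr rfl fun k hk => ?_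
    rw [hmin k (Finset.mem_range.mp hk)]
  have hdec : θ - θ' = ((s m : ℝ) - (s' m : ℝ) + T - T') / 2 ^ (m+1) := by
    rw [hθeq, hθ'eq, tl_prefix s hsle m, tl_prefix s' hsle' m, hpre,
      tl_step s hsle m, tl_step s' hsle' m, pow_succ]
    ring
  -- digit identification
  have hsm : s m = 1 ∧ s' m = 0 := by
    by_contra hcon
    have h5 : s m = 0 ∧ s' m = 1 := by
      have := hsle m; have := hsle' m; omega
    have hneg : θ - θ' < 0 := by
      rw [hdec, h5.1, h5.2]
      apply div_neg_of_neg_of_pos _ hpow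
      push_cast
      linarith
    linarith
  have hdec2 : θ - θ' = (1 + T - T') / 2 ^ (m+1) := by
    rw [hdec, hsm.1, hsm.2]; norm_num
  -- T' ≤ 2θ'
  have hθ'lt : θ' < 1/2 := lt_of_lt_of_le h1 h2
  have hT'le : T' ≤ 2 * θ' := by
    have hstep' : tl s' m = T' / 2 := by
      rw [tl_step s' hsle' m, hsm.2]; norm_num; rfl
    have hlt1 : tl s' m < 1 := by rw [hstep']; linarith
    have hDm := D_iter s' hsle' m hlt1
    have hnot := hθ'.2 m
    rw [← hθ'eq] at hDm
    rw [hDm, hstep', Set.mem_Ioo] at hnot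
    push_neg at hnot
    by_contra hcon
    push_neg at hcon
    have := hnot (by linarith)
    linarith
  -- T ≥ 1 - 2θ  (always true given θ ≤ 1/2, θ' > 0)
  have hTge : 1 - 2 * θ ≤ T := by
    rcases eq_or_lt_of_le (tl_le_one s hsle m) with h | h
    · have : T = 1 := tl_one_succ s hsle m h
      linarith
    · have hDm := D_iter s hsle m h
      have hnot := hθ.2 m
      rw [← hθeq] at hDm
      rw [hDm, tl_step s hsle m, hsm.1, Set.mem_Ioo] at hnot
      push_neg at hnot
      have h6 : θ < (1:ℝ)/2 + tl s (m+1) / 2 := by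
        linarith
      have := hnot (by push_cast; linarith)
      linarith
  constructor
  · rw [hdec2]
    by_cases hhalf : θ = 1/2
    · -- then T = 1
      have hs0 : tl s 1 = 1 := by
        have h7 := tl_step s hsle 0
        rw [← hθeq, hhalf] at h7
        have h8 : 0 < tl s 1 := tl_pos s hsle hsinf 1
        have h9 : tl s 1 ≤ 1 := tl_le_one s hsle 1
        have h10 : (s 0 : ℝ) + tl s 1 = 1 := by linarith
        have h11 : s 0 = 0 := by
          by_contra hc
          have : s 0 = 1 := by have := hsle 0; omega
          rw [this] at h10; push_cast at h10; linarith
        rw [h11] at h10; push_cast at h10; linarith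
      have hTone : ∀ i : ℕ, tl s (1 + i) = 1 := by
        intro i
        induction i with
        | zero => exact hs0
        | succ n ih => have := tl_one_succ s hsle (1+n) ih
                       rwa [show 1+n+1 = 1+(n+1) by omega] at this
      have hTeq : T = 1 := by rw [hT, show m+1 = 1+m by omega]; exact hTone m
      rw [if_pos hhalf, hTeq]
      gcongr
      linarith
    · rw [if_neg hhalf]
      have hlt : θ < 1/2 := lt_of_le_of_ne h2 hhalf
      gcongr
      linarith
  · rw [hdec2]
    have h12 : (1:ℝ) / 2 ^ m = 2 / 2 ^ (m+1) := by
      rw [pow_succ]; ring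
    rw [h12]
    gcongr
    linarith


end
end

section
/- Let θ ∈ 𝓡 ∩ (0, 1/2) be purely periodic for the doubling map (D^p(θ) = θ for some p ≥ 1) and satellite, i.e. there exists k ≥ 0 with D^k(θ) = 1 − θ. Then the extended entropy H is locally constant at θ: there exists ε > 0 such that H is constant on (θ − ε, θ + ε) ∩ [0, 1/2]. -/
open scoped Topology

noncomputable section

/- ### Auxiliary development ### -/

def zz (θ : ℝ) (n : ℕ) : ℝ := Int.fract ((2:ℝ)^n * θ)




lemma fract_two_mul_fract (y : ℝ) : Int.fract (2 * Int.fract y) = Int.fract (2 * y) := by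
  have : 2 * Int.fract y = 2 * y - (2 * ⌊y⌋ : ℤ) := by
    push_cast [Int.fract]; ring
  rw [this, Int.fract_sub_intCast]

lemma fract_pow_mul_fract (a : ℕ) (w : ℝ) :
    Int.fract ((2:ℝ)^a * Int.fract w) = Int.fract ((2:ℝ)^a * w) := by
  induction a generalizing w with
  | zero => simp [Int.fract_fract]
  | succ n ih =>
    have h1 : (2:ℝ)^(n+1) * Int.fract w = 2^n * (2 * Int.fract w) := by ring
    have h2 : (2:ℝ)^(n+1) * w = 2^n * (2 * w) := by ring
    calc Int.fract ((2:ℝ)^(n+1) * Int.fract w)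
        = Int.fract ((2:ℝ)^n * (2 * Int.fract w)) := by rw [h1]
      _ = Int.fract ((2:ℝ)^n * Int.fract (2 * Int.fract w)) := (ih (2 * Int.fract w)).symm
      _ = Int.fract ((2:ℝ)^n * Int.fract (2 * w)) := by rw [fract_two_mul_fract]
      _ = Int.fract ((2:ℝ)^n * (2 * w)) := ih (2*w)
      _ = Int.fract ((2:ℝ)^(n+1) * w) := by rw [← h2]

lemma D_iterate (x : ℝ) (hx : x ∈ Set.Ico (0:ℝ) 1) (n : ℕ) :
    D^[n] x = Int.fract ((2:ℝ)^n * x) := by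
  induction n with
  | zero => simp [Int.fract_eq_self.2 hx]
  | succ n ih =>
    rw [Function.iterate_succ_apply', ih, D, fract_two_mul_fract,
      show (2:ℝ) * (2^n * x) = 2^(n+1) * x by ring]

lemma fract_le_of_nonneg (z : ℝ) (hz : 0 ≤ z) : Int.fract z ≤ z := by
  rw [Int.fract]
  have : (0:ℝ) ≤ ⌊z⌋ := by exact_mod_cast Int.floor_nonneg.2 hz
  linarith

lemma fract_pow_le (b : ℕ) (y : ℝ) : Int.fract ((2:ℝ)^b * y) ≤ 2^b * Int.fract y := by
  rw [← fract_pow_mul_fract]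
  exact fract_le_of_nonneg _ (mul_nonneg (by positivity) (Int.fract_nonneg y))



lemma floor_const_eq (x : ℝ) (m : ℤ) (h1 : (m:ℝ) ≤ x) (h2 : x < m+1) :
    ⌊x⌋ = m := by
  exact Int.floor_eq_iff.2 ⟨h1, h2⟩

/-- flip gap lemma -/
lemma lemFlip (P : ℕ) (hP : 1 ≤ P) (v : ℝ) (hv0 : 0 < v)
    (hv : Int.fract ((2:ℝ)^P * v) = 1 - v) (x : ℝ)
    (hx1 : (⌊(2:ℝ)^P * v⌋ : ℝ)/((2:ℝ)^P - 1) < x) (hx2 : x < v) :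
    Int.fract ((2:ℝ)^P * x) ∈ Set.Ioo x (1-x) := by
  set m : ℤ := ⌊(2:ℝ)^P * v⌋ with hm
  have hP2' : (2:ℝ) ≤ 2^P := by
    calc (2:ℝ) = 2^1 := (pow_one 2).symm
    _ ≤ 2^P := by exact pow_le_pow_right₀ one_le_two hP
  have hpos : (0:ℝ) < 2^P - 1 := by linarith
  have hmns : (0:ℝ) ≤ m := by
    exact_mod_cast Int.floor_nonneg.2 (by positivity)
  have hveq : (2:ℝ)^P * v = m + 1 - v := by
    have h := Int.fract ((2:ℝ)^P * v)
    rw [Int.fract] at hv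
    linarith [hv]
  have hx0 : 0 < x := lt_of_le_of_lt (div_nonneg hmns hpos.le) hx1
  have hxlow : (m:ℝ) ≤ 2^P * x := by
    have h := (div_lt_iff₀ hpos).1 hx1
    nlinarith
  have hxhigh : (2:ℝ)^P * x < m + 1 := by
    have : (2:ℝ)^P * x < 2^P * v := by nlinarith
    linarith
  have hfr : Int.fract ((2:ℝ)^P * x) = 2^P * x - m := by
    rw [Int.fract, floor_const_eq _ m hxlow (by linarith)]
  rw [hfr]
  constructor
  · -- 2^P x - m > x
    have : (m:ℝ) < (2^P - 1) * x := by
      have := (div_lt_iff₀ hpos).1 hx1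
      linarith
    linarith [this]
  · -- 2^P x - m < 1 - x
    have : ((2:ℝ)^P + 1) * x < m + 1 := by nlinarith
    linarith

/-- fixed gap lemma -/
lemma lemFix (P : ℕ) (hP : 1 ≤ P) (v : ℝ) (hv0 : 0 < v)
    (hv : Int.fract ((2:ℝ)^P * v) = v) (x : ℝ)
    (hx1 : v < x) (hx2 : x < ((⌊(2:ℝ)^P * v⌋ : ℝ) + 1)/((2:ℝ)^P + 1)) :
    Int.fract ((2:ℝ)^P * x) ∈ Set.Ioo x (1-x) := by
  set m : ℤ := ⌊(2:ℝ)^P * v⌋ with hm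
  have hP2' : (2:ℝ) ≤ 2^P := by
    calc (2:ℝ) = 2^1 := (pow_one 2).symm
    _ ≤ 2^P := by exact pow_le_pow_right₀ one_le_two hP
  have hmns : (0:ℝ) ≤ m := by
    exact_mod_cast Int.floor_nonneg.2 (by positivity)
  have hveq : (2:ℝ)^P * v = m + v := by
    rw [Int.fract] at hv; linarith
  have hpos : (0:ℝ) < 2^P - 1 := by linarith
  have hveq2 : v = m / (2^P - 1) := by
    rw [eq_div_iff hpos.ne']
    linarith
  have hxlow : (m:ℝ) ≤ 2^P * x := by nlinarith
  have hxhigh : (2:ℝ)^P * x < m + 1 := by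
    have h2 : x * ((2:ℝ)^P+1) < m + 1 := by
      have := (lt_div_iff₀ (by linarith : (0:ℝ) < 2^P+1)).1 hx2
      linarith
    nlinarith
  have hfr : Int.fract ((2:ℝ)^P * x) = 2^P * x - m := by
    rw [Int.fract, floor_const_eq _ m hxlow (by linarith)]
  rw [hfr]
  constructor
  · nlinarith
  · have h2 : x * ((2:ℝ)^P+1) < m + 1 := by
      have := (lt_div_iff₀ (by linarith : (0:ℝ) < 2^P+1)).1 hx2
      linarith
    linarith [h2]




lemma no_small_period (θ : ℝ) (hhalf : θ ≠ 1/2) (k : ℕ) (hk : 1 ≤ k)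
    (hsat : D^[k] θ = 1 - θ) (hmin : ∀ j, 1 ≤ j → j < k → D^[j] θ ≠ 1 - θ)
    (hper2k : D^[2*k] θ = θ) :
    ∀ j, 1 ≤ j → j < 2*k → D^[j] θ ≠ θ := by
  intro j hj1 hj2 hj
  have hpp : Function.IsPeriodicPt D j θ := hj
  have hpp2 : Function.IsPeriodicPt D (2*k) θ := hper2k
  set q := Function.minimalPeriod D θ with hq
  have hq0 : 0 < q := hpp.minimalPeriod_pos hj1
  have hqj : q ∣ j := hpp.minimalPeriod_dvd
  have hq2k : q ∣ 2*k := hpp2.minimalPeriod_dvd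
  have hqlej : q ≤ j := Nat.le_of_dvd hj1 hqj
  have hqk : q ≤ k := by
    rcases hq2k with ⟨s, hs⟩
    have hs2 : 2 ≤ s := by
      by_contra h
      interval_cases s
      · omega
      · omega
    have h2 : q*2 ≤ q*s := Nat.mul_le_mul (le_refl q) hs2
    omega
  have hrk : D^[k % q] θ = 1 - θ := by
    rw [← hsat]
    exact Function.iterate_mod_minimalPeriod_eq
  rcases Nat.eq_zero_or_pos (k % q) with h0 | hpos
  · rw [h0] at hrk
    simp at hrk
    apply hhalf
    linarith
  · exact hmin _ hpos (by
      have := Nat.mod_lt k hq0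
      omega) hrk




/-- orbit function -/



lemma zz_add (θ : ℝ) (a b : ℕ) : zz θ (a+b) = Int.fract ((2:ℝ)^b * zz θ a) := by
  rw [zz, zz, fract_pow_mul_fract, ← mul_assoc, ← pow_add, Nat.add_comm a b]

lemma zz_per (θ : ℝ) (p : ℕ) (N : ℤ) (h : (2:ℝ)^p * θ = N + θ) (n : ℕ) :
    zz θ (n + p) = zz θ n := by
  rw [zz, zz]
  have h1 : (2:ℝ)^(n+p) * θ = 2^n * θ + ((N * 2^n : ℤ) : ℝ) := by
    have : (2:ℝ)^(n+p) * θ = 2^n * (2^p * θ) := by rw [pow_add]; ring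
    rw [this, h]; push_cast; ring
  rw [h1, Int.fract_add_intCast]

lemma zz_per_mul (θ : ℝ) (p : ℕ) (N : ℤ) (h : (2:ℝ)^p * θ = N + θ) (s n : ℕ) :
    zz θ (n + p * s) = zz θ n := by
  induction s with
  | zero => simp
  | succ t ih =>
    have : n + p * (t+1) = (n + p * t) + p := by ring
    rw [this, zz_per θ p N h, ih]


set_option maxHeartbeats 1600000 in
lemma theta_minus_avoids (θ : ℝ) (hθ0 : 0 < θ) (hθh : θ < 1/2) (k : ℕ) (hk : 1 ≤ k)
    (hsat : Int.fract ((2:ℝ)^k * θ) = 1 - θ)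
    (hmin : ∀ j, 1 ≤ j → j < k → Int.fract ((2:ℝ)^j * θ) ≠ 1 - θ)
    (hR : ∀ n : ℕ, Int.fract ((2:ℝ)^n * θ) ∉ Set.Ioo θ (1-θ))
    (hm1 : 1 ≤ ⌊(2:ℝ)^k * θ⌋) :
    ∀ n : ℕ, Int.fract ((2:ℝ)^n * ((⌊(2:ℝ)^k * θ⌋:ℝ)/((2:ℝ)^k-1)))
      ∉ Set.Ioo ((⌊(2:ℝ)^k * θ⌋:ℝ)/((2:ℝ)^k-1)) (1 - (⌊(2:ℝ)^k * θ⌋:ℝ)/((2:ℝ)^k-1)) := by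
  set m : ℤ := ⌊(2:ℝ)^k * θ⌋ with hm
  set tm : ℝ := (m:ℝ)/((2:ℝ)^k - 1) with htmdef
  have h2k : (2:ℝ) ≤ 2^k := by
    calc (2:ℝ) = 2^1 := (pow_one 2).symm
    _ ≤ 2^k := by exact pow_le_pow_right₀ one_le_two hk
  have hpos : (0:ℝ) < 2^k - 1 := by linarith
  have hθeq : (2:ℝ)^k * θ = m + 1 - θ := by
    rw [Int.fract] at hsat; linarith
  have hmR : (1:ℝ) ≤ (m:ℝ) := by exact_mod_cast hm1
  have htm : (2:ℝ)^k * tm = m + tm := by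
    rw [htmdef]; field_simp; ring
  have htm0 : 0 < tm := by positivity
  have htmθ : tm < θ := by
    rw [htmdef, div_lt_iff₀ hpos]
    nlinarith
  have hδ : (2:ℝ)^k * (θ - tm) = 1 - θ - tm := by linarith
  have hδ0 : 0 < θ - tm := by linarith
  have htmh : tm < 1/2 := by linarith
  have hIco : θ ∈ Set.Ico (0:ℝ) 1 := ⟨hθ0.le, by linarith⟩
  -- z basics
  have hz2k' : zz θ (2*k) = θ := by
    have h1 : zz θ (2*k) = Int.fract ((2:ℝ)^k * zz θ k) := by
      rw [show 2*k = k + k by ring, zz_add]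
    have h2 : zz θ k = 1 - θ := hsat
    rw [h1, h2]
    have h3 : (2:ℝ)^k * (1-θ) = θ + ((2^k - m - 1 : ℤ) : ℝ) := by
      push_cast; linarith
    rw [h3, Int.fract_add_intCast, Int.fract_eq_self.2 ⟨hθ0.le, by linarith⟩]
  have hN2 : (2:ℝ)^(2*k) * θ = ((⌊(2:ℝ)^(2*k) * θ⌋ : ℤ) : ℝ) + θ := by
    have := hz2k'
    rw [zz, Int.fract] at this
    linarith
  have hzper : ∀ n, zz θ (n + 2*k) = zz θ n := zz_per θ (2*k) _ hN2
  have hzmul : ∀ s n, zz θ (n + 2*k*s) = zz θ n := zz_per_mul θ (2*k) _ hN2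
  have hz0 : ∀ n, zz θ n ≠ 0 := by
    intro n h0
    have hb : n + (2*k*(n+1) - n) = 0 + 2*k*(n+1) := by
      have : n ≤ 2*k*(n+1) := by nlinarith [hk]
      omega
    have h1 : zz θ (n + (2*k*(n+1) - n)) = 0 := by
      rw [zz_add, h0]
      simp
    rw [hb, hzmul (n+1) 0] at h1
    rw [zz] at h1
    simp only [pow_zero, one_mul] at h1
    rw [Int.fract_eq_self.2 ⟨hθ0.le, by linarith⟩] at h1
    linarith
  have hzflip : ∀ n, zz θ (n + k) = 1 - zz θ n := by
    intro n
    have hsk : zz θ k = 1 - θ := hsat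
    rw [show n + k = k + n by omega, zz_add θ k n, hsk]
    have h1 : (2:ℝ)^n * (1-θ) = -((2:ℝ)^n * θ) + (((2:ℕ)^n : ℤ) : ℝ) := by
      push_cast; ring
    rw [h1, Int.fract_add_intCast, Int.fract_neg (hz0 n)]
    rfl
  -- floor lemma
  have hfractlb : ∀ i : ℕ, i ≤ k → (2:ℝ)^i * (θ - tm) < Int.fract ((2:ℝ)^i * θ) := by
    intro i hik
    have key : Int.fract ((2:ℝ)^k * θ) ≤ 2^(k-i) * Int.fract ((2:ℝ)^i * θ) := by
      have := fract_pow_le (k-i) ((2:ℝ)^i * θ)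
      have hexp : (2:ℝ)^(k-i) * ((2:ℝ)^i * θ) = (2:ℝ)^k * θ := by
        rw [← mul_assoc, ← pow_add]
        congr 2
        omega
      rwa [hexp] at this
    have hkk : (2:ℝ)^(k-i) * ((2:ℝ)^i * (θ - tm)) = 1 - θ - tm := by
      rw [← mul_assoc, ← pow_add, show k - i + i = k by omega, hδ]
    have h1θ : 1 - θ ≤ 2^(k-i) * Int.fract ((2:ℝ)^i * θ) := by rw [← hsat]; exact key
    have hp : (0:ℝ) < 2^(k-i) := by positivity
    nlinarith [htm0]
  have hyz : ∀ i : ℕ, i ≤ k → zz tm i = zz θ i - 2^i * (θ - tm) := by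
    intro i hik
    have hfl : ⌊(2:ℝ)^i * tm⌋ = ⌊(2:ℝ)^i * θ⌋ := by
      have h1 : ((⌊(2:ℝ)^i * θ⌋ : ℝ)) ≤ (2:ℝ)^i * tm := by
        have := hfractlb i hik
        rw [Int.fract] at this
        nlinarith [htmθ]
      have h2 : (2:ℝ)^i * tm < ⌊(2:ℝ)^i * θ⌋ + 1 := by
        have hlt : (2:ℝ)^i * tm < 2^i * θ := by
          have : (0:ℝ) < 2^i := by positivity
          nlinarith
        have := Int.lt_floor_add_one ((2:ℝ)^i * θ)
        linarith
      exact Int.floor_eq_iff.2 ⟨h1, h2⟩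
    rw [zz, zz, Int.fract, Int.fract, hfl]
    ring
  have htmper : ∀ n, zz tm (n + k) = zz tm n := zz_per tm k m htm
  have hymod : ∀ n, zz tm n = zz tm (n % k) := by
    intro n
    conv_lhs => rw [show n = n % k + k * (n / k) from (Nat.mod_add_div n k).symm]
    exact zz_per_mul tm k m htm (n/k) (n%k)
  have hD : ∀ n, D^[n] θ = zz θ n := fun n => D_iterate θ hIco n
  have hnoper : ∀ j, 1 ≤ j → j < 2*k → zz θ j ≠ θ := by
    intro j h1 h2
    have hh := no_small_period θ (by intro h; rw [h] at hθh; linarith) k hk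
      (by rw [hD]; exact hsat)
      (fun i hi1 hi2 => by rw [hD]; exact hmin i hi1 hi2)
      (by rw [hD]; exact hz2k') j h1 h2
    rw [← hD j]
    exact hh
  have hzz0 : zz θ 0 = θ := by
    rw [zz, pow_zero, one_mul, Int.fract_eq_self.2 ⟨hθ0.le, by linarith⟩]
  have hfractm : Int.fract tm = tm := Int.fract_eq_self.2 ⟨htm0.le, by linarith⟩
  -- THE CORE STEP
  have core : ∀ j, 1 ≤ j → j < k → zz tm j ∈ Set.Ioo tm (1-tm) →
      ∃ Δ : ℝ, 0 < Δ ∧ Δ < 2^j*(θ-tm) ∧ 1 - zz θ j = tm - Δ ∧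
        zz tm (k-j) = θ + 2^(k-j)*Δ := by
    intro j hj1 hjk hbad
    obtain ⟨hbl, hbr⟩ := hbad
    have hp2j : (0:ℝ) < 2^j := by positivity
    have hyzj : zz tm j = zz θ j - 2^j*(θ-tm) := hyz j hjk.le
    have hδprod : (0:ℝ) < 2^j*(θ-tm) := mul_pos hp2j hδ0
    have hzgt : tm < zz θ j := by linarith
    have hznot : zz θ j ∉ Set.Ioo θ (1-θ) := hR j
    have hflipj : Int.fract ((2:ℝ)^k * zz θ j) = 1 - zz θ j := by
      rw [← zz_add θ j k]; exact hzflip j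
    have hzub : ¬ (zz θ j < θ) := by
      intro hlt
      have hfl := lemFlip k hk θ hθ0 hsat (zz θ j) hzgt hlt
      rw [hflipj] at hfl
      exact absurd hfl.2 (lt_irrefl _)
    have hzne : zz θ j ≠ θ := hnoper j hj1 (by omega)
    have hzge : 1 - θ ≤ zz θ j := by
      by_contra hcon
      push_neg at hcon
      have hθlt : θ < zz θ j := lt_of_le_of_ne (not_lt.1 hzub) (Ne.symm hzne)
      exact hznot ⟨hθlt, hcon⟩
    set u := 1 - zz θ j with hu
    have hu_le : u ≤ θ := by rw [hu]; linarith
    have hfku : Int.fract ((2:ℝ)^k * u) = 1 - u := by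
      have h1 : zz θ (j+k) = u := hzflip j
      have h2 : Int.fract ((2:ℝ)^k * zz θ (j+k)) = zz θ ((j+k)+k) := (zz_add θ (j+k) k).symm
      have h3 : zz θ ((j+k)+k) = 1 - zz θ (j+k) := hzflip (j+k)
      rw [h1] at h2 h3
      rw [h2, h3]
    have hune : u ≠ tm := by
      intro he
      have hftm : Int.fract ((2:ℝ)^k * tm) = tm := by
        have harg : (2:ℝ)^k * tm = tm + (m:ℝ) := by linarith
        rw [harg, Int.fract_add_intCast, hfractm]
      rw [he, hftm] at hfku
      linarith
    have hu_ne_θ : u ≠ θ := by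
      intro he
      have : zz θ j = 1 - θ := by rw [hu] at he; linarith
      exact hmin j hj1 hjk this
    have hult : ¬ (tm < u) := by
      intro hlt
      have hu_lt : u < θ := lt_of_le_of_ne hu_le hu_ne_θ
      have hfl := lemFlip k hk θ hθ0 hsat u hlt hu_lt
      rw [hfku] at hfl
      exact absurd hfl.2 (lt_irrefl _)
    have hu_lt_tm : u < tm := lt_of_le_of_ne (not_lt.1 hult) hune
    have hΔlt : tm - u < 2^j*(θ-tm) := by
      rw [hu]
      linarith
    have hθu : Int.fract ((2:ℝ)^(k-j) * u) = θ := by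
      have h1 : zz θ (j+k) = u := hzflip j
      have h2 : Int.fract ((2:ℝ)^(k-j) * zz θ (j+k)) = zz θ ((j+k)+(k-j)) :=
        (zz_add θ (j+k) (k-j)).symm
      have h3 : (j+k)+(k-j) = 0 + 2*k := by omega
      rw [h1] at h2
      rw [h2, h3, hzper 0, hzz0]
    have hp2kj : (0:ℝ) < 2^(k-j) := by positivity
    have hprod : (2:ℝ)^(k-j) * 2^j = 2^k := by
      rw [← pow_add]; congr 1; omega
    refine ⟨tm - u, by linarith, hΔlt, by rw [hu]; ring, ?_⟩
    have hNu : (2:ℝ)^(k-j) * u = (⌊(2:ℝ)^(k-j)*u⌋ : ℝ) + θ := by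
      rw [Int.fract] at hθu; linarith
    have hbound : θ + 2^(k-j)*(tm - u) < 1 - tm := by
      have h5 : (2:ℝ)^(k-j)*(tm-u) < 2^(k-j)*(2^j*(θ-tm)) :=
        mul_lt_mul_of_pos_left hΔlt hp2kj
      rw [← mul_assoc, hprod] at h5
      linarith
    have harg : (2:ℝ)^(k-j) * tm = (⌊(2:ℝ)^(k-j)*u⌋ : ℝ) + (θ + 2^(k-j)*(tm - u)) := by
      linear_combination hNu
    have hself : Int.fract (θ + 2^(k-j)*(tm - u)) = θ + 2^(k-j)*(tm - u) := by
      refine Int.fract_eq_self.2 ⟨?_, by linarith⟩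
      have := mul_pos hp2kj (show (0:ℝ) < tm - u by linarith)
      linarith
    rw [zz, harg, Int.fract_intCast_add, hself]
  -- FINAL ASSEMBLY
  intro n hbadn
  have hbad' : zz tm (n % k) ∈ Set.Ioo tm (1-tm) := by
    rw [← hymod]; exact hbadn
  rcases Nat.eq_zero_or_pos (n % k) with h0 | hj1
  · rw [h0] at hbad'
    have : zz tm 0 = tm := by rw [zz, pow_zero, one_mul, hfractm]
    rw [this] at hbad'
    exact absurd hbad'.1 (lt_irrefl _)
  · obtain ⟨j, hjdef⟩ : ∃ j, j = n % k := ⟨_, rfl⟩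
    rw [← hjdef] at hbad' hj1
    have hjk : j < k := by rw [hjdef]; exact Nat.mod_lt n (by omega)
    obtain ⟨Δ₁, hΔ₁0, hΔ₁lt, hEq₁, hY₁⟩ := core j hj1 hjk hbad'
    have hp2j : (0:ℝ) < 2^j := by positivity
    have hp2kj : (0:ℝ) < 2^(k-j) := by positivity
    have hprod : (2:ℝ)^(k-j) * 2^j = 2^k := by
      rw [← pow_add]; congr 1; omega
    have hbad₂ : zz tm (k-j) ∈ Set.Ioo tm (1-tm) := by
      rw [hY₁]
      constructor
      · have := mul_pos hp2kj hΔ₁0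
        linarith
      · have h5 : (2:ℝ)^(k-j)*Δ₁ < 2^(k-j)*(2^j*(θ-tm)) :=
        mul_lt_mul_of_pos_left hΔ₁lt hp2kj
        rw [← mul_assoc, hprod] at h5
        linarith
    obtain ⟨Δ₂, hΔ₂0, hΔ₂lt, hEq₂, hY₂⟩ := core (k-j) (by omega) (by omega) hbad₂
    rw [show k-(k-j) = j by omega] at hY₂
    have hyzj : zz tm j = zz θ j - 2^j*(θ-tm) := hyz j hjk.le
    have hyzkj : zz tm (k-j) = zz θ (k-j) - 2^(k-j)*(θ-tm) := hyz (k-j) (by omega)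
    -- derive Δ₁ = 2^j δ, contradiction
    have e1 : θ + 2^(k-j)*Δ₁ = zz θ (k-j) - 2^(k-j)*(θ-tm) := by rw [← hY₁, hyzkj]
    have e2 : zz θ (k-j) = 1 - tm + Δ₂ := by linarith [hEq₂]
    have e3 : θ + 2^j*Δ₂ = zz θ j - 2^j*(θ-tm) := by rw [← hY₂, hyzj]
    have e4 : zz θ j = 1 - tm + Δ₁ := by linarith [hEq₁]
    have hab : (1:ℝ) < 2^(k-j) * 2^j := by rw [hprod]; linarith
    -- substitute
    have f1 : θ + 2^(k-j)*Δ₁ = 1 - tm + Δ₂ - 2^(k-j)*(θ-tm) := by rw [e1, e2]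
    have f2 : θ + 2^j*Δ₂ = 1 - tm + Δ₁ - 2^j*(θ-tm) := by rw [e3, e4]
    have h1tm : 1 - tm = θ + (2^(k-j)*2^j)*(θ - tm) := by
      rw [hprod]; linarith
    have key : ((2:ℝ)^(k-j)*2^j - 1) * (Δ₁ - 2^j*(θ-tm)) = 0 := by
      linear_combination ((2:ℝ)^j) * f1 + f2 + ((2:ℝ)^j+1) * h1tm
    have hne : ((2:ℝ)^(k-j)*2^j - 1) ≠ 0 := by
      rw [hprod]; intro h; rw [sub_eq_zero] at h; linarith
    have hzero : Δ₁ - 2^j*(θ-tm) = 0 := by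
      rcases mul_eq_zero.1 key with h | h
      · exact absurd h hne
      · exact h
    linarith






lemma neg_one_zpow_abs (d : ℤ) : |(-1:ℝ)^d| = 1 := by
  rcases Int.even_or_odd d with h | h
  · rw [h.neg_one_zpow]; norm_num
  · rw [h.neg_one_zpow]; norm_num

lemma neg_one_zpow_one_sub (d : ℤ) : (-1:ℝ)^(1-d) = -((-1:ℝ)^d) := by
  rcases Int.even_or_odd d with h | h
  · obtain ⟨r, hr⟩ := h
    have ho : Odd (1-d) := ⟨-r, by omega⟩
    rw [ho.neg_one_zpow, Even.neg_one_zpow ⟨r, hr⟩]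
    try norm_num
  · obtain ⟨r, hr⟩ := h
    have he : Even (1-d) := ⟨-r, by omega⟩
    rw [he.neg_one_zpow, Odd.neg_one_zpow ⟨r, hr⟩]
    try norm_num

lemma neg_one_zpow_sub_one (d : ℤ) : (-1:ℝ)^(d-1) = -((-1:ℝ)^d) := by
  rcases Int.even_or_odd d with h | h
  · obtain ⟨r, hr⟩ := h
    have ho : Odd (d-1) := ⟨r-1, by omega⟩
    rw [ho.neg_one_zpow, Even.neg_one_zpow ⟨r, hr⟩]
    try norm_num
  · obtain ⟨r, hr⟩ := h
    have he : Even (d-1) := ⟨r, by omega⟩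
    rw [he.neg_one_zpow, Odd.neg_one_zpow ⟨r, hr⟩]
    try norm_num

lemma neg_one_zpow_odd (a : ℤ) : (-1:ℝ)^(2*a+1) = -1 := by
  exact (odd_two_mul_add_one a).neg_one_zpow

lemma ceil_of_fract_ne (r : ℝ) (h : Int.fract r ≠ 0) : ⌈r⌉ = ⌊r⌋ + 1 := by
  have h1 : (⌊r⌋:ℝ) < r := by
    rcases lt_or_eq_of_le (Int.floor_le r) with h' | h'
    · exact h'
    · exfalso; apply h; rw [Int.fract, ← h']; simp
  refine Int.ceil_eq_iff.2 ⟨by push_cast; simpa using h1, by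
    push_cast
    linarith [Int.lt_floor_add_one r]⟩

lemma dig_per (x : ℝ) (p : ℕ) (N : ℤ) (h : (2:ℝ)^p * x = N + x) (j : ℕ) :
    dig x (j + p) = dig x j := by
  have key : ∀ i : ℕ, ⌈(2:ℝ)^(i+p) * x⌉ = ⌈(2:ℝ)^i * x⌉ + 2^i * N := by
    intro i
    have e : (2:ℝ)^(i+p) * x = (2:ℝ)^i * x + ((2^i * N : ℤ) : ℝ) := by
      have : (2:ℝ)^(i+p) * x = (2:ℝ)^i * ((2:ℝ)^p * x) := by
        rw [← mul_assoc, ← pow_add]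
      rw [this, h]; push_cast; ring
    rw [e, Int.ceil_add_intCast]
  have k1 := key (j+1)
  have k2 := key j
  rw [dig, dig, show j + p + 1 = (j+1) + p by omega, k1, k2]
  ring

lemma dig_anti (x : ℝ) (p : ℕ) (N : ℤ) (h : (2:ℝ)^p * x = N - x)
    (hnd : ∀ i : ℕ, Int.fract ((2:ℝ)^i * x) ≠ 0) (j : ℕ) :
    dig x (j + p) = 1 - dig x j := by
  have key : ∀ i : ℕ, ⌈(2:ℝ)^(i+p) * x⌉ = -⌊(2:ℝ)^i * x⌋ + 2^i * N := by
    intro i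
    have e : (2:ℝ)^(i+p) * x = -((2:ℝ)^i * x) + ((2^i * N : ℤ) : ℝ) := by
      have : (2:ℝ)^(i+p) * x = (2:ℝ)^i * ((2:ℝ)^p * x) := by
        rw [← mul_assoc, ← pow_add]
      rw [this, h]; push_cast; ring
    rw [e, Int.ceil_add_intCast, Int.ceil_neg]
  have k1 := key (j+1)
  have k2 := key j
  have c1 : ⌈(2:ℝ)^(j+1) * x⌉ = ⌊(2:ℝ)^(j+1) * x⌋ + 1 := ceil_of_fract_ne _ (hnd (j+1))
  have c2 : ⌈(2:ℝ)^j * x⌉ = ⌊(2:ℝ)^j * x⌋ + 1 := ceil_of_fract_ne _ (hnd j)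
  rw [dig, dig, show j + p + 1 = (j+1) + p by omega, k1, k2, c1, c2]
  ring

lemma summable_dig (x t : ℝ) (h0 : 0 ≤ t) (h1 : t < 1) :
    Summable (fun j : ℕ => (-1:ℝ)^(dig x j) * t^(j+1)) := by
  apply Summable.of_norm_bounded (g := fun j : ℕ => t * t^j)
    ((summable_geometric_of_lt_one h0 h1).mul_left t)
  intro j
  rw [Real.norm_eq_abs, abs_mul, neg_one_zpow_abs, one_mul, abs_pow, abs_of_nonneg h0,
    pow_succ]
  ring_nf
  exact le_refl _

lemma tsum_anti (a : ℕ → ℝ) (p : ℕ) (r : ℝ) (hs : Summable a)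
    (hrec : ∀ j, a (j+p) = r * a j) :
    (1 - r) * ∑' j, a j = ∑ i ∈ Finset.range p, a i := by
  have h := Summable.sum_add_tsum_nat_add p hs
  have h2 : ∑' i : ℕ, a (i+p) = r * ∑' i, a i := by
    simp_rw [hrec]
    exact tsum_mul_left
  rw [h2] at h
  rw [sub_mul, one_mul]
  linarith [h]


lemma zz_ne_zero (θ : ℝ) (hθ0 : 0 < θ) (hθ1 : θ < 1) (p : ℕ) (hp : 1 ≤ p) (N : ℤ)
    (h : (2:ℝ)^p * θ = N + θ) : ∀ n, zz θ n ≠ 0 := by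
  intro n h0
  have hb : n + (p*(n+1) - n) = 0 + p*(n+1) := by
    have : n ≤ p*(n+1) := by nlinarith [hp]
    omega
  have h1 : zz θ (n + (p*(n+1) - n)) = 0 := by
    rw [zz_add, h0]
    simp
  rw [hb, zz_per_mul θ p N h (n+1) 0] at h1
  rw [zz] at h1
  simp only [pow_zero, one_mul] at h1
  rw [Int.fract_eq_self.2 ⟨hθ0.le, by linarith⟩] at h1
  linarith

lemma sat_fract_2k (θ : ℝ) (hθ0 : 0 < θ) (hθh : θ < 1/2) (k : ℕ)
    (hsat : Int.fract ((2:ℝ)^k * θ) = 1 - θ) : Int.fract ((2:ℝ)^(2*k) * θ) = θ := by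
  have hθeq : (2:ℝ)^k * θ = (⌊(2:ℝ)^k*θ⌋:ℝ) + 1 - θ := by
    rw [Int.fract] at hsat; linarith
  have h1 : zz θ (2*k) = Int.fract ((2:ℝ)^k * zz θ k) := by
    rw [show 2*k = k + k by ring, zz_add]
  have h2 : zz θ k = 1 - θ := hsat
  have goal : zz θ (2*k) = θ := by
    rw [h1, h2]
    have h3 : (2:ℝ)^k * (1-θ) = θ + ((2^k - ⌊(2:ℝ)^k*θ⌋ - 1 : ℤ) : ℝ) := by
      push_cast; linarith
    rw [h3, Int.fract_add_intCast, Int.fract_eq_self.2 ⟨hθ0.le, by linarith⟩]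
  exact goal

lemma pr_factor (θ : ℝ) (hθ0 : 0 < θ) (hθh : θ < 1/2) (k : ℕ) (hk : 1 ≤ k)
    (hsat : Int.fract ((2:ℝ)^k * θ) = 1 - θ) (t : ℝ) (ht0 : 0 < t) (ht1 : t < 1) :
    (1 + t^k) * Pr θ t = 1 + t^k + ∑ i ∈ Finset.range k, (-1:ℝ)^(dig (2*θ) i) * t^(i+1) := by
  have hnd : ∀ i : ℕ, Int.fract ((2:ℝ)^i * (2*θ)) ≠ 0 := by
    intro i
    have h1 : (2:ℝ)^i * (2*θ) = 2^(i+1) * θ := by rw [pow_succ]; ring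
    rw [h1]
    have h2k' := sat_fract_2k θ hθ0 hθh k hsat
    have hN : (2:ℝ)^(2*k) * θ = ((⌊(2:ℝ)^(2*k)*θ⌋ : ℤ) : ℝ) + θ := by
      rw [Int.fract] at h2k'; linarith
    exact zz_ne_zero θ hθ0 (by linarith) (2*k) (by omega) _ hN (i+1)
  have hθeq : (2:ℝ)^k * θ = (⌊(2:ℝ)^k*θ⌋:ℝ) + 1 - θ := by
    rw [Int.fract] at hsat; linarith
  have hanti : ∀ j, dig (2*θ) (j+k) = 1 - dig (2*θ) j := by
    apply dig_anti (2*θ) k (2*(⌊(2:ℝ)^k*θ⌋+1)) (by push_cast; linarith) hnd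
  set a : ℕ → ℝ := fun j => (-1:ℝ)^(dig (2*θ) j) * t^(j+1) with ha
  have hs : Summable a := summable_dig _ t ht0.le ht1
  have hrec : ∀ j, a (j+k) = (-(t^k)) * a j := by
    intro j
    simp only [ha]
    rw [hanti j, neg_one_zpow_one_sub, show j+k+1 = (j+1)+k by omega, pow_add]
    ring
  have hfac := tsum_anti a k (-(t^k)) hs hrec
  have h2 : (1 + t^k) * ∑' j, a j = ∑ i ∈ Finset.range k, a i := by
    rw [← hfac]; ring
  have h3 : (1 + t^k) * (1 + ∑' j, a j) = 1 + t^k + (1 + t^k) * ∑' j, a j := by ring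
  rw [Pr]
  rw [show (∑' (j:ℕ), (-1:ℝ)^(dig (2*θ) j) * t^(j+1)) = ∑' j, a j from rfl, h3, h2]

lemma pr_factor_periodic (x : ℝ) (k : ℕ) (N : ℤ) (hper : (2:ℝ)^k * (2*x) = N + 2*x)
    (t : ℝ) (ht0 : 0 < t) (ht1 : t < 1) :
    (1 - t^k) * Pr x t = 1 - t^k + ∑ i ∈ Finset.range k, (-1:ℝ)^(dig (2*x) i) * t^(i+1) := by
  have hperd : ∀ j, dig (2*x) (j+k) = dig (2*x) j := dig_per (2*x) k N hper
  set a : ℕ → ℝ := fun j => (-1:ℝ)^(dig (2*x) j) * t^(j+1) with ha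
  have hs : Summable a := summable_dig _ t ht0.le ht1
  have hrec : ∀ j, a (j+k) = (t^k) * a j := by
    intro j
    simp only [ha]
    rw [hperd j, show j+k+1 = (j+1)+k by omega, pow_add]
    ring
  have hfac := tsum_anti a k (t^k) hs hrec
  have h3 : (1 - t^k) * (1 + ∑' j, a j) = 1 - t^k + (1 - t^k) * ∑' j, a j := by ring
  rw [Pr]
  rw [show (∑' (j:ℕ), (-1:ℝ)^(dig (2*x) j) * t^(j+1)) = ∑' j, a j from rfl, h3, hfac]


lemma pr_relation (θ : ℝ) (hθ0 : 0 < θ) (hθh : θ < 1/2) (k : ℕ) (hk : 1 ≤ k)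
    (hsat : Int.fract ((2:ℝ)^k * θ) = 1 - θ) (hm1 : 1 ≤ ⌊(2:ℝ)^k * θ⌋)
    (t : ℝ) (ht0 : 0 < t) (ht1 : t < 1) :
    (1 + t^k) * Pr θ t = (1 - t^k) * Pr ((⌊(2:ℝ)^k * θ⌋:ℝ)/((2:ℝ)^k-1)) t := by
  set m : ℤ := ⌊(2:ℝ)^k * θ⌋ with hm
  set tm : ℝ := (m:ℝ)/((2:ℝ)^k - 1) with htmdef
  have h2k : (2:ℝ) ≤ 2^k := by
    calc (2:ℝ) = 2^1 := (pow_one 2).symm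
    _ ≤ 2^k := by exact pow_le_pow_right₀ one_le_two hk
  have hpos : (0:ℝ) < 2^k - 1 := by linarith
  have hθeq : (2:ℝ)^k * θ = m + 1 - θ := by
    rw [Int.fract] at hsat; linarith
  have hmR : (1:ℝ) ≤ (m:ℝ) := by exact_mod_cast hm1
  have htm : (2:ℝ)^k * tm = m + tm := by
    rw [htmdef]; field_simp; ring
  have htm0 : 0 < tm := by positivity
  have htmθ : tm < θ := by
    rw [htmdef, div_lt_iff₀ hpos]
    nlinarith
  have hδ : (2:ℝ)^k * (θ - tm) = 1 - θ - tm := by linarith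
  have hδ0 : 0 < θ - tm := by linarith
  have htmh : tm < 1/2 := by linarith
  -- floor equality
  have hfractlb : ∀ i : ℕ, i ≤ k → (2:ℝ)^i * (θ - tm) < Int.fract ((2:ℝ)^i * θ) := by
    intro i hik
    have key : Int.fract ((2:ℝ)^k * θ) ≤ 2^(k-i) * Int.fract ((2:ℝ)^i * θ) := by
      have := fract_pow_le (k-i) ((2:ℝ)^i * θ)
      have hexp : (2:ℝ)^(k-i) * ((2:ℝ)^i * θ) = (2:ℝ)^k * θ := by
        rw [← mul_assoc, ← pow_add]
        congr 2
        omega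
      rwa [hexp] at this
    have hkk : (2:ℝ)^(k-i) * ((2:ℝ)^i * (θ - tm)) = 1 - θ - tm := by
      rw [← mul_assoc, ← pow_add, show k - i + i = k by omega, hδ]
    have h1θ : 1 - θ ≤ 2^(k-i) * Int.fract ((2:ℝ)^i * θ) := by rw [← hsat]; exact key
    have hp : (0:ℝ) < 2^(k-i) := by positivity
    nlinarith [htm0]
  have hfl : ∀ i : ℕ, i ≤ k → ⌊(2:ℝ)^i * tm⌋ = ⌊(2:ℝ)^i * θ⌋ := by
    intro i hik
    have h1 : ((⌊(2:ℝ)^i * θ⌋ : ℝ)) ≤ (2:ℝ)^i * tm := by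
      have := hfractlb i hik
      rw [Int.fract] at this
      nlinarith [htmθ]
    have h2 : (2:ℝ)^i * tm < ⌊(2:ℝ)^i * θ⌋ + 1 := by
      have hlt : (2:ℝ)^i * tm < 2^i * θ := by
        have : (0:ℝ) < 2^i := by positivity
        nlinarith
      have := Int.lt_floor_add_one ((2:ℝ)^i * θ)
      linarith
    exact Int.floor_eq_iff.2 ⟨h1, h2⟩
  -- nondyadic
  have hndθ : ∀ i, Int.fract ((2:ℝ)^i * θ) ≠ 0 := by
    have h2k' := sat_fract_2k θ hθ0 hθh k hsat
    have hN : (2:ℝ)^(2*k) * θ = ((⌊(2:ℝ)^(2*k)*θ⌋ : ℤ) : ℝ) + θ := by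
      rw [Int.fract] at h2k'; linarith
    exact zz_ne_zero θ hθ0 (by linarith) (2*k) (by omega) _ hN
  have hndtm : ∀ i, Int.fract ((2:ℝ)^i * tm) ≠ 0 :=
    zz_ne_zero tm htm0 (by linarith) k hk m htm
  -- ceil equalities for i ≤ k-1
  have hceil : ∀ i : ℕ, i ≤ k-1 → ⌈(2:ℝ)^i * (2*tm)⌉ = ⌈(2:ℝ)^i * (2*θ)⌉ := by
    intro i hik
    rcases Nat.eq_zero_or_pos i with h0 | hipos
    · subst h0
      simp only [pow_zero, one_mul]
      rw [show ⌈(2:ℝ)*tm⌉ = 1 from Int.ceil_eq_iff.2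
          ⟨by push_cast; linarith, by push_cast; linarith⟩,
        show ⌈(2:ℝ)*θ⌉ = 1 from Int.ceil_eq_iff.2
          ⟨by push_cast; linarith, by push_cast; linarith⟩]
    · have e1 : (2:ℝ)^i * (2*tm) = 2^(i+1) * tm := by rw [pow_succ]; ring
      have e2 : (2:ℝ)^i * (2*θ) = 2^(i+1) * θ := by rw [pow_succ]; ring
      rw [e1, e2, ceil_of_fract_ne _ (hndtm (i+1)), ceil_of_fract_ne _ (hndθ (i+1)),
        hfl (i+1) (by omega)]
  -- ceil at k
  have hfloor2θ : ⌊(2:ℝ)*θ⌋ = 0 := by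
    rw [Int.floor_eq_zero_iff]
    constructor
    · linarith
    · linarith
  have hceilkθ : ⌈(2:ℝ)^k * (2*θ)⌉ = 2*(m+1) := by
    have e : (2:ℝ)^k * (2*θ) = -((2:ℝ)*θ) + ((2*(m+1) : ℤ):ℝ) := by push_cast; linarith
    rw [e, Int.ceil_add_intCast, Int.ceil_neg, hfloor2θ]
    ring
  have hceilktm : ⌈(2:ℝ)^k * (2*tm)⌉ = 2*m + 1 := by
    have e : (2:ℝ)^k * (2*tm) = (2:ℝ)*tm + ((2*m : ℤ):ℝ) := by push_cast; linarith
    rw [e, Int.ceil_add_intCast,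
      show ⌈(2:ℝ)*tm⌉ = 1 from Int.ceil_eq_iff.2
        ⟨by push_cast; linarith, by push_cast; linarith⟩]
    ring
  -- digs at k-1
  have hkm1 : k - 1 + 1 = k := by omega
  have hdigθ : dig (2*θ) (k-1) = 2*(m + 1 - ⌈(2:ℝ)^(k-1) * (2*θ)⌉) + 1 := by
    rw [dig, hkm1, hceilkθ]; ring
  have hdigtm : dig (2*tm) (k-1) = dig (2*θ) (k-1) - 1 := by
    rw [dig, dig, hkm1, hceilkθ, hceilktm, hceil (k-1) (le_refl _)]
    ring
  have hsignθ : (-1:ℝ)^(dig (2*θ) (k-1)) = -1 := by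
    rw [hdigθ]; exact neg_one_zpow_odd _
  have hsigntm : (-1:ℝ)^(dig (2*tm) (k-1)) = 1 := by
    rw [hdigtm, neg_one_zpow_sub_one, hsignθ]; norm_num
  -- head sums
  have hheadθ := pr_factor θ hθ0 hθh k hk hsat t ht0 ht1
  have hheadtm := pr_factor_periodic tm k (2*m) (by push_cast; linarith) t ht0 ht1
  have hsplit : ∀ x : ℝ, ∑ i ∈ Finset.range k, (-1:ℝ)^(dig (2*x) i) * t^(i+1)
      = (∑ i ∈ Finset.range (k-1), (-1:ℝ)^(dig (2*x) i) * t^(i+1))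
        + (-1:ℝ)^(dig (2*x) (k-1)) * t^k := by
    intro x
    conv_lhs => rw [← hkm1]
    rw [Finset.sum_range_succ, hkm1]
  have hheads_eq : ∑ i ∈ Finset.range (k-1), (-1:ℝ)^(dig (2*tm) i) * t^(i+1)
      = ∑ i ∈ Finset.range (k-1), (-1:ℝ)^(dig (2*θ) i) * t^(i+1) := by
    apply Finset.sum_congr rfl
    intro i hi
    rw [Finset.mem_range] at hi
    have hdigeq : dig (2*tm) i = dig (2*θ) i := by
      rw [dig, dig, hceil i (by omega), hceil (i+1) (by omega)]
    rw [hdigeq]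
  rw [hheadθ, hheadtm, hsplit θ, hsplit tm, hheads_eq, hsignθ, hsigntm]
  ring


lemma rr_eq_satellite (θ : ℝ) (hθ0 : 0 < θ) (hθh : θ < 1/2) (k : ℕ) (hk : 1 ≤ k)
    (hsat : Int.fract ((2:ℝ)^k * θ) = 1 - θ) (hm1 : 1 ≤ ⌊(2:ℝ)^k * θ⌋) :
    rr θ = rr ((⌊(2:ℝ)^k * θ⌋:ℝ)/((2:ℝ)^k-1)) := by
  rw [rr, rr]
  congr 1
  ext t
  simp only [Set.mem_union, Set.mem_setOf_eq, Set.mem_singleton_iff]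
  constructor
  · rintro (⟨ht, hPr⟩ | h)
    · left
      refine ⟨ht, ?_⟩
      have hrel := pr_relation θ hθ0 hθh k hk hsat hm1 t ht.1 ht.2
      rw [hPr, mul_zero] at hrel
      have hfac : (0:ℝ) < 1 - t^k := by
        have := pow_lt_one₀ ht.1.le ht.2 (by omega : k ≠ 0)
        linarith
      rcases mul_eq_zero.1 hrel.symm with h | h
      · linarith
      · exact h
    · right; exact h
  · rintro (⟨ht, hPr⟩ | h)
    · left
      refine ⟨ht, ?_⟩
      have hrel := pr_relation θ hθ0 hθh k hk hsat hm1 t ht.1 ht.2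
      rw [hPr, mul_zero] at hrel
      have hfac : (0:ℝ) < 1 + t^k := by
        have := pow_nonneg ht.1.le k
        linarith
      rcases mul_eq_zero.1 hrel with h | h
      · linarith
      · exact h
    · right; exact h

lemma ceil_four_thirds : ⌈(4:ℝ)/3⌉ = 2 := by
  refine Int.ceil_eq_iff.2 ⟨by norm_num, by norm_num⟩

lemma rr_one_third : rr ((1:ℝ)/3) = 1 := by
  have hsat : Int.fract ((2:ℝ)^1 * (1/3)) = 1 - 1/3 := by
    rw [show (2:ℝ)^1 * (1/3) = 2/3 by norm_num, Int.fract_eq_self.2 (by norm_num)]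
    norm_num
  have hempty : {t : ℝ | t ∈ Set.Ioo (0:ℝ) 1 ∧ Pr (1/3) t = 0} = ∅ := by
    ext t
    simp only [Set.mem_setOf_eq, Set.mem_empty_iff_false, iff_false, not_and]
    intro ht hPr
    have hfac := pr_factor (1/3) (by norm_num) (by norm_num) 1 (le_refl 1) hsat t ht.1 ht.2
    rw [hPr, mul_zero] at hfac
    rw [Finset.sum_range_one] at hfac
    have hdig : dig (2*((1:ℝ)/3)) 0 = 1 := by
      rw [dig]
      rw [show (2:ℝ)^(0+1) * (2*(1/3)) = 4/3 by norm_num,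
        show (2:ℝ)^0 * (2*(1/3)) = 2/3 by norm_num]
      rw [ceil_four_thirds, show ⌈(2:ℝ)/3⌉ = 1 from Int.ceil_eq_iff.2 ⟨by norm_num, by norm_num⟩]
      ring
    rw [hdig] at hfac
    norm_num at hfac
  rw [rr, hempty, Set.empty_union, csInf_singleton]

lemma ent_one_third : ent ((1:ℝ)/3) = 0 := by
  rw [ent, if_neg (by norm_num), rr_one_third, Real.log_one, neg_zero]

lemma hext_locally_const (θ tm θp : ℝ) (hθ𝓡 : θ ∈ 𝓡) (htm𝓡 : tm ∈ 𝓡)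
    (htmθ : tm < θ) (hθp : θ < θp) (hent : ent tm = ent θ)
    (hgapL : ∀ x, tm < x → x < θ → x ∉ 𝓡)
    (hgapR : ∀ x, θ < x → x < θp → x ∉ 𝓡) :
    ∃ ε > (0:ℝ), ∀ x ∈ Set.Ioo (θ - ε) (θ + ε) ∩ Set.Icc (0:ℝ) (1/2), Hext x = Hext θ := by
  refine ⟨min (θ - tm) (θp - θ), lt_min (by linarith) (by linarith), ?_⟩
  intro x hx
  obtain ⟨⟨hx1, hx2⟩, hxIcc⟩ := hx
  have hmin1 : min (θ - tm) (θp - θ) ≤ θ - tm := min_le_left _ _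
  have hmin2 : min (θ - tm) (θp - θ) ≤ θp - θ := min_le_right _ _
  rcases le_or_gt θ x with hcase | hcase
  · have hset : {a | a ∈ 𝓡 ∧ a ≤ x} = {a | a ∈ 𝓡 ∧ a ≤ θ} := by
      ext a
      simp only [Set.mem_setOf_eq]
      constructor
      · rintro ⟨ha𝓡, hax⟩
        refine ⟨ha𝓡, ?_⟩
        by_contra hcon
        push_neg at hcon
        exact hgapR a hcon (lt_of_le_of_lt hax (by linarith)) ha𝓡
      · rintro ⟨ha, h⟩
        exact ⟨ha, le_trans h hcase⟩
    rw [Hext, Hext, hset]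
  · have himg : ent '' {a | a ∈ 𝓡 ∧ a ≤ x} = ent '' {a | a ∈ 𝓡 ∧ a ≤ θ} := by
      apply Set.Subset.antisymm
      · apply Set.image_mono
        rintro a ⟨h1, h2⟩
        exact ⟨h1, le_trans h2 hcase.le⟩
      · rintro v ⟨a, ⟨ha𝓡, haθ⟩, rfl⟩
        rcases le_or_gt a x with h | h
        · exact ⟨a, ⟨ha𝓡, h⟩, rfl⟩
        · have haeq : a = θ := by
            by_contra hne
            exact hgapL a (by linarith) (lt_of_le_of_ne haθ hne) ha𝓡
          refine ⟨tm, ⟨htm𝓡, by linarith⟩, ?_⟩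
          rw [hent, haeq]
    rw [Hext, Hext, himg]


/-- at a satellite purely periodic angle, the extended entropy is
locally constant. -/
theorem satellite_locally_constant (θ : ℝ) (hθ : θ ∈ 𝓡 ∩ Set.Ioo 0 (1/2 : ℝ))
    (p : ℕ) (hp : 1 ≤ p) (hper : D^[p] θ = θ) (k : ℕ) (hsat : D^[k] θ = 1 - θ) :
    ∃ ε > (0:ℝ), ∀ x ∈ Set.Ioo (θ - ε) (θ + ε) ∩ Set.Icc (0:ℝ) (1/2), Hext x = Hext θ := by
  classical
  obtain ⟨hθR, hθ0, hθh⟩ := hθ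
  obtain ⟨hθIcc, hR⟩ := hθR
  have hIco : θ ∈ Set.Ico (0:ℝ) 1 := ⟨hθ0.le, by linarith⟩
  have hDit : ∀ n, D^[n] θ = Int.fract ((2:ℝ)^n * θ) := D_iterate θ hIco
  have hkex : ∃ j, 1 ≤ j ∧ D^[j] θ = 1 - θ := by
    refine ⟨k, ?_, hsat⟩
    rcases Nat.eq_zero_or_pos k with h0 | h
    · exfalso
      rw [h0] at hsat
      simp at hsat
      linarith
    · exact h
  set k₀ := Nat.find hkex with hk₀def
  obtain ⟨hk₀1, hsatD⟩ : 1 ≤ k₀ ∧ D^[k₀] θ = 1 - θ := Nat.find_spec hkex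
  have hminD : ∀ j, 1 ≤ j → j < k₀ → D^[j] θ ≠ 1 - θ := by
    intro j h1 h2 hc
    exact Nat.find_min hkex h2 ⟨h1, hc⟩
  have hsatf : Int.fract ((2:ℝ)^k₀ * θ) = 1 - θ := by rw [← hDit]; exact hsatD
  have hminf : ∀ j, 1 ≤ j → j < k₀ → Int.fract ((2:ℝ)^j * θ) ≠ 1 - θ := by
    intro j h1 h2
    rw [← hDit]
    exact hminD j h1 h2
  have hRf : ∀ n, Int.fract ((2:ℝ)^n * θ) ∉ Set.Ioo θ (1-θ) := by
    intro n
    rw [← hDit]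
    exact hR n
  set m : ℤ := ⌊(2:ℝ)^k₀ * θ⌋ with hm
  set tm : ℝ := (m:ℝ)/((2:ℝ)^k₀ - 1) with htmdef
  have h2k : (2:ℝ) ≤ 2^k₀ := by
    calc (2:ℝ) = 2^1 := (pow_one 2).symm
    _ ≤ 2^k₀ := by exact pow_le_pow_right₀ one_le_two hk₀1
  have hpos : (0:ℝ) < 2^k₀ - 1 := by linarith
  have hθeq : (2:ℝ)^k₀ * θ = m + 1 - θ := by
    rw [Int.fract] at hsatf; linarith
  have hm0 : 0 ≤ m := Int.floor_nonneg.2 (by positivity)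
  have hm0R : (0:ℝ) ≤ (m:ℝ) := by exact_mod_cast hm0
  have htm_nonneg : 0 ≤ tm := by positivity
  have htmθ : tm < θ := by
    rw [htmdef, div_lt_iff₀ hpos]
    nlinarith
  have htmIco : tm ∈ Set.Ico (0:ℝ) 1 := ⟨htm_nonneg, by linarith⟩
  -- right gap data
  have hfix : Int.fract ((2:ℝ)^(2*k₀) * θ) = θ := sat_fract_2k θ hθ0 hθh k₀ hsatf
  set θp : ℝ := ((⌊(2:ℝ)^(2*k₀) * θ⌋ : ℝ) + 1)/((2:ℝ)^(2*k₀) + 1) with hθpdef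
  have hMeq : (2:ℝ)^(2*k₀) * θ = (⌊(2:ℝ)^(2*k₀) * θ⌋ : ℝ) + θ := by
    rw [Int.fract] at hfix; linarith
  have h2kk : (2:ℝ) ≤ 2^(2*k₀) := by
    calc (2:ℝ) = 2^1 := (pow_one 2).symm
    _ ≤ 2^(2*k₀) := by exact pow_le_pow_right₀ one_le_two (by omega)
  have hθp : θ < θp := by
    rw [hθpdef, lt_div_iff₀ (by linarith)]
    nlinarith
  have hgapR : ∀ x, θ < x → x < θp → x ∉ 𝓡 := by
    intro x h1 h2 hx𝓡
    obtain ⟨hxIcc, hxav⟩ := hx𝓡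
    have hxIco : x ∈ Set.Ico (0:ℝ) 1 := ⟨hxIcc.1, by linarith [hxIcc.2]⟩
    have := lemFix (2*k₀) (by omega) θ hθ0 hfix x h1 h2
    rw [← D_iterate x hxIco (2*k₀)] at this
    exact hxav (2*k₀) this
  have hgapL : ∀ x, tm < x → x < θ → x ∉ 𝓡 := by
    intro x h1 h2 hx𝓡
    obtain ⟨hxIcc, hxav⟩ := hx𝓡
    have hxIco : x ∈ Set.Ico (0:ℝ) 1 := ⟨hxIcc.1, by linarith [hxIcc.2]⟩
    have := lemFlip k₀ hk₀1 θ hθ0 hsatf x h1 h2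
    rw [← D_iterate x hxIco k₀] at this
    exact hxav k₀ this
  -- case split on m
  rcases eq_or_lt_of_le hm0 with hm0eq | hm1
  · -- m = 0 : θ = 1/3
    have hmz : m = 0 := hm0eq.symm
    have htmz : tm = 0 := by rw [htmdef, hmz]; norm_num
    have hθthird : θ ≥ 1/3 := by
      have h1 := hRf 1
      have h2θ : Int.fract ((2:ℝ)^1 * θ) = 2*θ := by
        rw [pow_one, Int.fract_eq_self.2 ⟨by linarith, by linarith⟩]
      rw [h2θ] at h1
      by_contra hc
      push_neg at hc
      exact h1 ⟨by linarith, by linarith⟩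
    have hk₀eq : (2:ℝ)^k₀ = 2 := by
      have hle : (2:ℝ)^k₀ ≤ 2 := by
        rw [hmz] at hθeq
        push_cast at hθeq
        nlinarith
      linarith
    have hθval : θ = 1/3 := by
      rw [hmz] at hθeq
      push_cast at hθeq
      rw [hk₀eq] at hθeq
      linarith
    have htm𝓡 : tm ∈ 𝓡 := by
      rw [htmz]
      constructor
      · constructor <;> norm_num
      · intro n
        have hD0 : D 0 = 0 := by
          rw [D, mul_zero, Int.fract_zero]
        rw [Function.iterate_fixed hD0 n]
        simp
    have hent : ent tm = ent θ := by
      rw [htmz, hθval, ent_one_third, ent, if_pos rfl]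
    exact hext_locally_const θ tm θp ⟨hθIcc, hR⟩ htm𝓡 htmθ hθp hent hgapL hgapR
  · -- m ≥ 1
    have hm1' : 1 ≤ m := hm1
    have htm0 : 0 < tm := by
      rw [htmdef]
      have : (1:ℝ) ≤ (m:ℝ) := by exact_mod_cast hm1'
      positivity
    have htm𝓡 : tm ∈ 𝓡 := by
      constructor
      · exact ⟨htm_nonneg, by linarith⟩
      · intro n
        rw [D_iterate tm htmIco n]
        exact theta_minus_avoids θ hθ0 hθh k₀ hk₀1 hsatf hminf hRf hm1' n
    have hent : ent tm = ent θ := by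
      rw [ent, ent, if_neg (by linarith), if_neg (by linarith),
        rr_eq_satellite θ hθ0 hθh k₀ hk₀1 hsatf hm1']
    exact hext_locally_const θ tm θp ⟨hθIcc, hR⟩ htm𝓡 htmθ hθp hent hgapL hgapR


end
end

section
/- Let θ ∈ 𝓡 ∩ (0, 1/2) be a primitive angle with D^p(θ) = θ (p ≥ 1), and pick δ > 0 such that D^k(θ) ∉ [θ, 1 − θ + 2δ] for all 0 < k < p. Let θ' ∈ 𝓡 be purely periodic with D^q(θ') = θ' (q ≥ 1) and θ − δ < θ' < θ. Write θ = Σ_{k≥1} s_k 2^{−k} and θ' = Σ_{k≥1} t_k 2^{−k} for their binary expansions (periodic with periods p and q respectively). Then the angle ξ := Σ_{k≥1} u_k 2^{−k}, where (u_k) is periodic with period p + q, u_k = s_k for 1 ≤ k ≤ p and u_{p+k} = t_k for 1 ≤ k ≤ q, belongs to 𝓡. -/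
open scoped Topology

noncomputable section

namespace ConcatAux

def bsh (n : ℕ) (a : ℕ → ℕ) : ℕ → ℕ := fun k => a (k + n)

def bval (a : ℕ → ℕ) : ℝ := ∑' k : ℕ, (a k : ℝ) / 2 ^ (k + 1)

lemma bsh_bsh (m n : ℕ) (a : ℕ → ℕ) : bsh m (bsh n a) = bsh (n + m) a := by
  funext k; unfold bsh; congr 1; omega

lemma bsummable (a : ℕ → ℕ) (ha : ∀ k, a k ≤ 1) :
    Summable (fun k : ℕ => (a k : ℝ) / 2 ^ (k + 1)) := by
  apply Summable.of_nonneg_of_le (fun k => by positivity) (fun k => ?_) summable_geometric_two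
  have h1 : (a k : ℝ) ≤ 1 := by exact_mod_cast ha k
  have h2 : ((1:ℝ)/2) ^ k = 1 / 2 ^ k := by rw [div_pow, one_pow]
  rw [h2]
  have h3 : (a k : ℝ) / 2 ^ (k+1) ≤ 1 / 2 ^ (k+1) := by gcongr
  refine h3.trans ?_
  gcongr
  · norm_num
  · omega

lemma bval_split (a : ℕ → ℕ) (ha : ∀ k, a k ≤ 1) (m : ℕ) :
    bval a = (∑ i ∈ Finset.range m, (a i : ℝ) / 2 ^ (i + 1)) + bval (bsh m a) / 2 ^ m := by
  have hsum := bsummable a ha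
  have h := Summable.sum_add_tsum_nat_add (f := fun k : ℕ => (a k : ℝ) / 2 ^ (k + 1)) m hsum
  rw [bval, ← h]
  congr 1
  have hc : ∀ i : ℕ, (a (i + m) : ℝ) / 2 ^ (i + m + 1)
      = ((bsh m a i : ℝ) / 2 ^ (i + 1)) * (1 / 2 ^ m) := by
    intro i
    show (a (i + m) : ℝ) / 2 ^ (i + m + 1) = ((a (i + m) : ℝ) / 2 ^ (i + 1)) * (1 / 2 ^ m)
    rw [show i + m + 1 = (i + 1) + m from by omega, pow_add]
    field_simp
  calc ∑' (i : ℕ), (a (i + m) : ℝ) / 2 ^ (i + m + 1)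
      = ∑' (i : ℕ), ((bsh m a i : ℝ) / 2 ^ (i + 1)) * (1 / 2 ^ m) := tsum_congr hc
    _ = (∑' (i : ℕ), (bsh m a i : ℝ) / 2 ^ (i + 1)) * (1 / 2 ^ m) := tsum_mul_right
    _ = bval (bsh m a) / 2 ^ m := by rw [bval]; ring

lemma bval_nonneg (a : ℕ → ℕ) : 0 ≤ bval a := tsum_nonneg (fun k => by positivity)

lemma bval_le_one (a : ℕ → ℕ) (ha : ∀ k, a k ≤ 1) : bval a ≤ 1 := by
  have h2 : ∑' k : ℕ, (1:ℝ) / 2 ^ (k+1) = 1 := by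
    rw [tsum_congr (fun k : ℕ => show (1:ℝ)/2^(k+1) = 1/2/2^k from by rw [pow_succ]; ring)]
    exact tsum_geometric_two' 1
  have hg : Summable (fun k : ℕ => (1:ℝ) / 2 ^ (k + 1)) := by
    simpa using bsummable (fun _ => 1) (fun _ => le_rfl)
  calc bval a ≤ ∑' k : ℕ, (1:ℝ) / 2 ^ (k+1) := by
        apply Summable.tsum_le_tsum _ (bsummable a ha) hg
        intro k
        gcongr
        exact_mod_cast ha k
    _ = 1 := h2

lemma geo_fin (m : ℕ) : ∑ i ∈ Finset.range m, (1:ℝ) / 2 ^ (i + 1) = 1 - 1 / 2 ^ m := by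
  induction m with
  | zero => simp
  | succ m ih =>
    rw [Finset.sum_range_succ, ih]
    have h : (2:ℝ) ^ (m + 1) = 2 * 2 ^ m := by ring
    have h0 : (2:ℝ) ^ m ≠ 0 := by positivity
    field_simp
    ring

lemma bval_lt_one (a : ℕ → ℕ) (ha : ∀ k, a k ≤ 1) (j : ℕ) (hj : a j = 0) : bval a < 1 := by
  have h := bval_split a ha (j + 1)
  rw [Finset.sum_range_succ, hj] at h
  have h2 : ∑ i ∈ Finset.range j, (a i : ℝ) / 2 ^ (i + 1)
      ≤ ∑ i ∈ Finset.range j, (1:ℝ) / 2 ^ (i + 1) :=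
    Finset.sum_le_sum (fun i _ => by gcongr; exact_mod_cast ha i)
  rw [geo_fin] at h2
  have h3 : bval (bsh (j+1) a) ≤ 1 := bval_le_one _ (fun k => ha _)
  have h4 : (0:ℝ) < 2 ^ (j+1) := by positivity
  have h5 : bval (bsh (j+1) a) / 2 ^ (j+1) ≤ 1 / 2 ^ (j+1) := by gcongr
  have h6 : (1:ℝ) / 2 ^ (j+1) = (1 / 2 ^ j) / 2 := by rw [pow_succ]; ring
  have h7 : (0:ℝ) < 1 / 2 ^ j := by positivity
  simp only [Nat.cast_zero, zero_div, add_zero] at h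
  rw [h] at *
  linarith

lemma D_bval (a : ℕ → ℕ) (ha : ∀ k, a k ≤ 1) (h0 : ∀ N, ∃ j, N ≤ j ∧ a j = 0) :
    D (bval a) = bval (bsh 1 a) := by
  have hsplit := bval_split a ha 1
  rw [Finset.sum_range_one] at hsplit
  have h2 : 2 * bval a = (a 0 : ℝ) + bval (bsh 1 a) := by
    rw [hsplit]; ring
  show Int.fract (2 * bval a) = bval (bsh 1 a)
  rw [h2]
  obtain ⟨j, hj, hj0⟩ := h0 1
  have hz : bsh 1 a (j - 1) = 0 := by
    show a (j - 1 + 1) = 0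
    rwa [Nat.sub_add_cancel hj]
  have hlt : bval (bsh 1 a) < 1 := bval_lt_one _ (fun k => ha _) _ hz
  have hge : 0 ≤ bval (bsh 1 a) := bval_nonneg _
  rw [show ((a 0 : ℝ)) = ((a 0 : ℤ) : ℝ) from by push_cast; ring, Int.fract_intCast_add]
  exact Int.fract_eq_self.mpr ⟨hge, hlt⟩

lemma D_iter_bval (a : ℕ → ℕ) (ha : ∀ k, a k ≤ 1) (h0 : ∀ N, ∃ j, N ≤ j ∧ a j = 0) :
    ∀ n, D^[n] (bval a) = bval (bsh n a) := by
  intro n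
  induction n with
  | zero => rfl
  | succ n ih =>
    have hz : ∀ N, ∃ j, N ≤ j ∧ bsh n a j = 0 := by
      intro N
      obtain ⟨j, hj, h⟩ := h0 (N + n)
      refine ⟨j - n, by omega, ?_⟩
      show a (j - n + n) = 0
      rwa [Nat.sub_add_cancel (by omega)]
    rw [Function.iterate_succ_apply', ih, D_bval (bsh n a) (fun k => ha _) hz, bsh_bsh]

lemma bval_le_of_digit (a b : ℕ → ℕ) (ha : ∀ k, a k ≤ 1) (hb : ∀ k, b k ≤ 1) (j : ℕ)
    (hpre : ∀ i < j, a i = b i) (haj : a j = 0) (hbj : b j = 1) : bval a ≤ bval b := by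
  have h1 := bval_split a ha (j + 1)
  have h2 := bval_split b hb (j + 1)
  rw [Finset.sum_range_succ, haj] at h1
  rw [Finset.sum_range_succ, hbj] at h2
  have hS : ∑ i ∈ Finset.range j, (a i : ℝ) / 2 ^ (i + 1)
      = ∑ i ∈ Finset.range j, (b i : ℝ) / 2 ^ (i + 1) :=
    Finset.sum_congr rfl (fun i hi => by rw [hpre i (Finset.mem_range.mp hi)])
  have hA : bval (bsh (j+1) a) ≤ 1 := bval_le_one _ (fun k => ha _)
  have hB : 0 ≤ bval (bsh (j+1) b) := bval_nonneg _
  have hp : (0:ℝ) < 2 ^ (j + 1) := by positivity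
  have h5 : bval (bsh (j+1) a) / 2 ^ (j+1) ≤ 1 / 2 ^ (j+1) := by gcongr
  have h6 : 0 ≤ bval (bsh (j+1) b) / 2 ^ (j+1) := by positivity
  simp only [Nat.cast_zero, Nat.cast_one, zero_div, add_zero] at h1 h2
  rw [h1, h2, hS]
  linarith

lemma per_mul (a : ℕ → ℕ) (P : ℕ) (h : ∀ k, a (k + P) = a k) :
    ∀ j k, a (k + P * j) = a k := by
  intro j
  induction j with
  | zero => intro k; simp
  | succ j ih =>
    intro k
    rw [show k + P * (j + 1) = (k + P) + P * j from by ring, ih, h]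

end ConcatAux

lemma ConcatAux.mul_add_div (c x y : ℝ) (hc : c ≠ 0) : c * (x + y / c) = c * x + y := by
  have h : c * (y / c) = y := by
    rw [mul_comm, div_mul_cancel₀ y hc]
  rw [mul_add, h]


set_option maxHeartbeats 1600000 in
open ConcatAux in
/-- concatenating the periodic block of a primitive angle `θ` with the
periodic block of a nearby purely periodic `θ' ∈ 𝓡` produces an angle `ξ ∈ 𝓡`. -/
theorem concatenation_in_R (θ θ' : ℝ) (p q : ℕ)
    (hθ : θ ∈ 𝓡 ∩ Set.Ioo 0 (1/2 : ℝ)) (hp : 1 ≤ p) (hper : D^[p] θ = θ)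
    (hprim : ∀ k : ℕ, D^[k] θ ≠ 1 - θ)
    (δ : ℝ) (hδ : 0 < δ) (hgap : ∀ k, 0 < k → k < p → D^[k] θ ∉ Set.Icc θ (1 - θ + 2 * δ))
    (hθ' : θ' ∈ 𝓡) (hq : 1 ≤ q) (hq' : D^[q] θ' = θ')
    (h1 : θ - δ < θ') (h2 : θ' < θ)
    (s t u : ℕ → ℕ) (hs : IsBinExp θ s) (hsper : ∀ k, s (k + p) = s k)
    (ht : IsBinExp θ' t) (htper : ∀ k, t (k + q) = t k)
    (hu1 : ∀ k < p, u k = s k) (hu2 : ∀ k < q, u (p + k) = t k)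
    (huper : ∀ k, u (k + (p + q)) = u k) :
    (∑' k : ℕ, (u k : ℝ) / 2 ^ (k+1)) ∈ 𝓡 := by
  classical
  obtain ⟨hsd, -, hsval⟩ := hs
  obtain ⟨htd, -, htval⟩ := ht
  have hθpos : 0 < θ := hθ.2.1
  have hθhalf : θ < 1/2 := hθ.2.2
  have hθ'0 : 0 ≤ θ' := hθ'.1.1
  have hθv : θ = bval s := hsval
  have hθ'v : θ' = bval t := htval
  have hPpos : 0 < p + q := by omega
  have h2pow : ∀ m : ℕ, (0:ℝ) < 2 ^ m := fun m => by positivity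
  -- u digits are binary
  have hud : ∀ k, u k ≤ 1 := by
    intro k
    have hk : u (k % (p + q) + (p + q) * (k / (p + q))) = u (k % (p + q)) :=
      per_mul u (p + q) huper _ _
    rw [Nat.mod_add_div] at hk
    have hmodlt : k % (p + q) < p + q := Nat.mod_lt _ hPpos
    rw [hk]
    by_cases hr : k % (p + q) < p
    · rw [hu1 _ hr]; exact hsd _
    · rw [show k % (p + q) = p + (k % (p + q) - p) from by omega,
        hu2 _ (by omega)]
      exact htd _
  -- leading digits are zero
  have hs0 : s 0 = 0 := by
    by_contra hc
    have h1' : s 0 = 1 := by have := hsd 0; omega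
    have h := bval_split s hsd 1
    rw [Finset.sum_range_one, h1', ← hθv] at h
    have h3 := bval_nonneg (bsh 1 s)
    norm_num at h
    linarith
  have ht0 : t 0 = 0 := by
    by_contra hc
    have h1' : t 0 = 1 := by have := htd 0; omega
    have h := bval_split t htd 1
    rw [Finset.sum_range_one, h1', ← hθ'v] at h
    have h3 := bval_nonneg (bsh 1 t)
    norm_num at h
    linarith
  have hu0 : u 0 = 0 := by rw [hu1 0 (by omega), hs0]
  -- infinitely many zero digits
  have hszeros : ∀ N, ∃ j, N ≤ j ∧ s j = 0 := by
    intro N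
    refine ⟨p * N, by calc N = 1 * N := (one_mul N).symm
      _ ≤ p * N := Nat.mul_le_mul_right N hp, ?_⟩
    have := per_mul s p hsper N 0
    simpa [hs0] using this
  have htzeros : ∀ N, ∃ j, N ≤ j ∧ t j = 0 := by
    intro N
    refine ⟨q * N, by calc N = 1 * N := (one_mul N).symm
      _ ≤ q * N := Nat.mul_le_mul_right N hq, ?_⟩
    have := per_mul t q htper N 0
    simpa [ht0] using this
  have huzeros : ∀ N, ∃ j, N ≤ j ∧ u j = 0 := by
    intro N
    refine ⟨(p + q) * N, by calc N = 1 * N := (one_mul N).symm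
      _ ≤ (p + q) * N := Nat.mul_le_mul_right N (by omega), ?_⟩
    have := per_mul u (p + q) huper N 0
    simpa [hu0] using this
  -- iterates as shifts
  have hDs : ∀ n, D^[n] θ = bval (bsh n s) := fun n => by
    rw [hθv]; exact D_iter_bval s hsd hszeros n
  have hDt : ∀ n, D^[n] θ' = bval (bsh n t) := fun n => by
    rw [hθ'v]; exact D_iter_bval t htd htzeros n
  have hDu : ∀ n, D^[n] (bval u) = bval (bsh n u) := D_iter_bval u hud huzeros
  -- periodicity of digit sequences
  have hshs : bsh p s = s := funext fun k => hsper k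
  have hsht : bsh q t = t := funext fun k => htper k
  have hshu : bsh (p + q) u = u := funext fun k => huper k
  -- the four basic splitting identities (multiplied forms)
  have Eθm : 2^p * θ = 2^p * (∑ i ∈ Finset.range p, (s i : ℝ)/2^(i+1)) + θ := by
    have h := bval_split s hsd p
    rw [hshs, ← hθv] at h
    nth_rewrite 1 [h]
    rw [mul_add_div _ _ _ (ne_of_gt (h2pow p))]
  have Eξm : 2^p * bval u = 2^p * (∑ i ∈ Finset.range p, (s i : ℝ)/2^(i+1)) + bval (bsh p u) := by
    have h := bval_split u hud p
    have hhead : ∑ i ∈ Finset.range p, (u i : ℝ)/2^(i+1)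
        = ∑ i ∈ Finset.range p, (s i : ℝ)/2^(i+1) :=
      Finset.sum_congr rfl fun i hi => by rw [hu1 i (Finset.mem_range.mp hi)]
    rw [hhead] at h
    nth_rewrite 1 [h]
    rw [mul_add_div _ _ _ (ne_of_gt (h2pow p))]
  have Eθ'm : 2^q * θ' = 2^q * (∑ i ∈ Finset.range q, (t i : ℝ)/2^(i+1)) + θ' := by
    have h := bval_split t htd q
    rw [hsht, ← hθ'v] at h
    nth_rewrite 1 [h]
    rw [mul_add_div _ _ _ (ne_of_gt (h2pow q))]
  have Eηm : 2^q * bval (bsh p u) = 2^q * (∑ i ∈ Finset.range q, (t i : ℝ)/2^(i+1)) + bval u := by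
    have h := bval_split (bsh p u) (fun k => hud _) q
    rw [bsh_bsh, hshu] at h
    have hhead : ∑ i ∈ Finset.range q, (bsh p u i : ℝ)/2^(i+1)
        = ∑ i ∈ Finset.range q, (t i : ℝ)/2^(i+1) := by
      refine Finset.sum_congr rfl fun i hi => ?_
      have hiq := Finset.mem_range.mp hi
      show (u (i + p) : ℝ)/2^(i+1) = (t i : ℝ)/2^(i+1)
      rw [show i + p = p + i from by omega, hu2 i hiq]
    rw [hhead] at h
    nth_rewrite 1 [h]
    rw [mul_add_div _ _ _ (ne_of_gt (h2pow q))]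
  -- basic order facts about ξ = bval u and η = bval (bsh p u)
  have ha2 : (2:ℝ) ≤ 2^p := by
    calc (2:ℝ) = 2^1 := (pow_one 2).symm
    _ ≤ 2^p := pow_le_pow_right₀ one_le_two hp
  have hb2 : (2:ℝ) ≤ 2^q := by
    calc (2:ℝ) = 2^1 := (pow_one 2).symm
    _ ≤ 2^q := pow_le_pow_right₀ one_le_two hq
  have hd : 0 < θ - θ' := by linarith
  have hdδ : θ - θ' < δ := by linarith
  have key : (bval u - θ) * (2^p * 2^q - 1) = (θ - θ') * (1 - 2^q) := by
    linear_combination (2:ℝ)^q * Eξm - (2:ℝ)^q * Eθm + Eηm - Eθ'm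
  have hab1 : (1:ℝ) < 2^p * 2^q := by
    have h := mul_le_mul ha2 hb2 (by norm_num) (by linarith : (0:ℝ) ≤ 2^p)
    linarith
  have hab0 : (0:ℝ) < 2^p * 2^q - 1 := by linarith
  have hX : bval u < θ := by
    have hzlt : (bval u - θ) * (2^p * 2^q - 1) < 0 := by
      rw [key]; exact mul_neg_of_pos_of_neg hd (by linarith)
    by_contra hcon
    push_neg at hcon
    exact absurd hzlt (not_lt.mpr (mul_nonneg (by linarith) hab0.le))
  have hab_b : (0:ℝ) < 2^p * 2^q - 2^q := by
    have h := mul_le_mul_of_nonneg_left ha2 (h2pow q).le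
    have hq0 := h2pow q
    nlinarith
  have keyX : (bval u - θ') * (2^p * 2^q - 1) = (θ - θ') * (2^p * 2^q - 2^q) := by
    linear_combination key
  have hθ'ξ : θ' < bval u := by
    have hzpos : 0 < (bval u - θ') * (2^p * 2^q - 1) := by
      rw [keyX]; exact mul_pos hd hab_b
    by_contra hcon
    push_neg at hcon
    exact absurd hzpos
      (not_lt.mpr (mul_nonpos_iff.mpr (Or.inr ⟨by linarith, hab0.le⟩)))
  have Em2 : 2^q * (bval (bsh p u) - θ') = bval u - θ' := by
    linear_combination Eηm - Eθ'm
  have hηθ' : θ' < bval (bsh p u) := by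
    by_contra hcon
    push_neg at hcon
    have hz : 2^q * (bval (bsh p u) - θ') ≤ 0 :=
      mul_nonpos_iff.mpr (Or.inl ⟨(h2pow q).le, by linarith⟩)
    linarith [Em2, hθ'ξ]
  have hηξ : bval (bsh p u) < bval u := by
    have h := mul_le_mul_of_nonneg_right hb2 (by linarith : 0 ≤ bval (bsh p u) - θ')
    linarith [Em2, hηθ']
  have hηθ : bval (bsh p u) < θ := hηξ.trans hX
  have keyXa : (2^p * (θ - bval u)) * (2^p * 2^q - 1) = (θ - θ') * (2^p * 2^q - 2^p) := by
    linear_combination (-(2:ℝ)^p) * key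
  have hXa : 2^p * (θ - bval u) ≤ θ - θ' := by
    have h5 : (θ - θ') * (2^p * 2^q - 2^p) ≤ (θ - θ') * (2^p * 2^q - 1) :=
      mul_le_mul_of_nonneg_left (by linarith) hd.le
    have h6 : (2^p * (θ - bval u)) * (2^p * 2^q - 1) ≤ (θ - θ') * (2^p * 2^q - 1) := by
      rw [keyXa]; exact h5
    exact le_of_mul_le_mul_right h6 hab0
  -- membership
  show bval u ∈ 𝓡
  refine ⟨⟨bval_nonneg u, by linarith⟩, ?_⟩
  intro n
  -- reduce to n % (p+q)
  have hfixmul : ∀ j : ℕ, D^[(p+q) * j] (bval u) = bval u := by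
    intro j
    induction j with
    | zero => simp
    | succ j ih =>
      rw [Nat.mul_succ, Function.iterate_add_apply, hDu (p+q), hshu]
      exact ih
  have hmod : D^[n] (bval u) = bval (bsh (n % (p+q)) u) := by
    conv_lhs => rw [← Nat.mod_add_div n (p+q)]
    rw [Function.iterate_add_apply, hfixmul, hDu]
  rw [hmod]
  set r := n % (p + q) with hrdef
  have hrlt : r < p + q := Nat.mod_lt _ hPpos
  rcases Nat.eq_zero_or_pos r with hr0 | hrpos
  · rw [hr0]
    intro hmem
    rw [Set.mem_Ioo] at hmem
    exact lt_irrefl _ hmem.1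
  intro hmem
  rw [Set.mem_Ioo] at hmem
  obtain ⟨hm1, hm2⟩ := hmem
  by_cases hrp : r < p
  · -- case 0 < r < p
    set m := p - r with hmdef
    have hmpos : 0 < m := by omega
    have hmlt : m < p := by omega
    have hrm : r + m = p := by omega
    have h2m := h2pow m
    have h1m : (1:ℝ) ≤ 2^m := by
      calc (1:ℝ) = 2^0 := by norm_num
      _ ≤ 2^m := pow_le_pow_right₀ one_le_two (Nat.zero_le m)
    have hmp : (2:ℝ)^m ≤ 2^p := pow_le_pow_right₀ one_le_two hmlt.le
    have P3 : 2^m * (θ - bval u) ≤ θ - θ' := by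
      have h := mul_le_mul_of_nonneg_right hmp (sub_nonneg.mpr hX.le)
      linarith [hXa, h]
    -- splitting identities at level m
    have Fθm : 2^m * bval (bsh r s)
        = 2^m * (∑ i ∈ Finset.range m, (s (i + r) : ℝ)/2^(i+1)) + θ := by
      have h := bval_split (bsh r s) (fun k => hsd _) m
      rw [bsh_bsh, hrm, hshs, ← hθv] at h
      have hhead : ∑ i ∈ Finset.range m, (bsh r s i : ℝ)/2^(i+1)
          = ∑ i ∈ Finset.range m, (s (i + r) : ℝ)/2^(i+1) := rfl
      rw [hhead] at h
      nth_rewrite 1 [h]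
      rw [mul_add_div _ _ _ (ne_of_gt h2m)]
    have Fξm : 2^m * bval (bsh r u)
        = 2^m * (∑ i ∈ Finset.range m, (s (i + r) : ℝ)/2^(i+1)) + bval (bsh p u) := by
      have h := bval_split (bsh r u) (fun k => hud _) m
      rw [bsh_bsh, hrm] at h
      have hhead : ∑ i ∈ Finset.range m, (bsh r u i : ℝ)/2^(i+1)
          = ∑ i ∈ Finset.range m, (s (i + r) : ℝ)/2^(i+1) := by
        refine Finset.sum_congr rfl fun i hi => ?_
        have him := Finset.mem_range.mp hi
        show (u (i + r) : ℝ)/2^(i+1) = (s (i + r) : ℝ)/2^(i+1)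
        rw [hu1 (i + r) (by omega)]
      rw [hhead] at h
      nth_rewrite 1 [h]
      rw [mul_add_div _ _ _ (ne_of_gt h2m)]
    -- the gap hypothesis at r
    have hg := hgap r hrpos hrp
    rw [hDs r] at hg
    simp only [Set.mem_Icc, not_and_or, not_le] at hg
    rcases hg with hlt | hgt
    · -- D^r θ < θ : compare digit sequences
      have hne : ∃ j, s (j + r) ≠ s j := by
        by_contra hc
        push_neg at hc
        have heq : bsh r s = s := funext fun k => hc k
        rw [heq, ← hθv] at hlt
        exact lt_irrefl _ hlt
      set j := Nat.find hne with hjdef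
      have hjne : s (j + r) ≠ s j := Nat.find_spec hne
      have hjmin : ∀ i < j, s (i + r) = s i := by
        intro i hi
        have := Nat.find_min hne hi
        exact not_not.mp this
      have e1 := hsd j
      have e2 := hsd (j + r)
      have hcase : (s j = 1 ∧ s (j + r) = 0) ∨ (s j = 0 ∧ s (j + r) = 1) := by omega
      rcases hcase with ⟨hj1, hj0⟩ | ⟨hj0, hj1⟩
      · by_cases hjm : j < m
        · -- lexicographic comparison of shifts of u
          have hle : bval (bsh r u) ≤ bval u := by
            apply bval_le_of_digit (bsh r u) u (fun k => hud _) hud j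
            · intro i hi
              show u (i + r) = u i
              rw [hu1 (i + r) (by omega), hu1 i (by omega), hjmin i hi]
            · show u (j + r) = 0
              rw [hu1 (j + r) (by omega), hj0]
            · show u j = 1
              rw [hu1 j (by omega), hj1]
          linarith
        · -- the first p - r digits of the shift agree with those of s
          push_neg at hjm
          have hAeqm : 2^m * (∑ i ∈ Finset.range m, (s (i + r) : ℝ)/2^(i+1))
              = 2^m * (∑ i ∈ Finset.range m, (s i : ℝ)/2^(i+1)) := by
            congr 1
            exact Finset.sum_congr rfl fun i hi => by
              rw [hjmin i (lt_of_lt_of_le (Finset.mem_range.mp hi) hjm)]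
          have Gθm : 2^m * θ = 2^m * (∑ i ∈ Finset.range m, (s i : ℝ)/2^(i+1))
              + bval (bsh m s) := by
            have h := bval_split s hsd m
            rw [← hθv] at h
            nth_rewrite 1 [h]
            rw [mul_add_div _ _ _ (ne_of_gt h2m)]
          have hgm := hgap m hmpos hmlt
          rw [hDs m] at hgm
          simp only [Set.mem_Icc, not_and_or, not_le] at hgm
          have hDmgt : 1 - θ + 2*δ < bval (bsh m s) := by
            rcases hgm with hcon | hok
            · exfalso
              linarith [Fθm, hAeqm, Gθm, hcon, mul_pos h2m (sub_pos.mpr hlt)]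
            · exact hok
          have Pmξ : 2^m * bval u < 2^m * bval (bsh r u) :=
            mul_lt_mul_of_pos_left hm1 h2m
          linarith [Fξm, hAeqm, Gθm, hDmgt, hηθ, hθhalf, hδ, P3, hdδ, Pmξ]
      · -- the opposite digit comparison contradicts D^r θ < θ
        exfalso
        have hle : bval s ≤ bval (bsh r s) := by
          apply bval_le_of_digit s (bsh r s) hsd (fun k => hsd _) j
          · intro i hi
            exact (hjmin i hi).symm
          · exact hj0
          · exact hj1
        rw [← hθv] at hle
        linarith
    · -- D^r θ > 1 - θ + 2δ
      have Pm1 : 2^m * (1 - θ + 2*δ) < 2^m * bval (bsh r s) :=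
        mul_lt_mul_of_pos_left hgt h2m
      have Pm2 : 2^m * bval (bsh r u) < 2^m * (1 - bval u) :=
        mul_lt_mul_of_pos_left hm2 h2m
      have P4 : 2*δ ≤ 2^m * (2*δ) := by
        have h := mul_le_mul_of_nonneg_right h1m (by linarith : (0:ℝ) ≤ 2*δ)
        linarith
      linarith [Fθm, Fξm, Pm1, Pm2, P3, P4, hηθ, hηθ', hdδ]
  · -- case p ≤ r < p + q
    push_neg at hrp
    set m := r - p with hmdef
    have hmq : m < q := by omega
    set M := q - m with hMdef
    have hM1 : 1 ≤ M := by omega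
    have hmM : m + M = q := by omega
    have hrM : r + M = p + q := by omega
    have h2M := h2pow M
    have h1M : (1:ℝ) ≤ 2^M := by
      calc (1:ℝ) = 2^0 := by norm_num
      _ ≤ 2^M := pow_le_pow_right₀ one_le_two (Nat.zero_le M)
    have Ftm : 2^M * bval (bsh m t)
        = 2^M * (∑ i ∈ Finset.range M, (t (i + m) : ℝ)/2^(i+1)) + θ' := by
      have h := bval_split (bsh m t) (fun k => htd _) M
      rw [bsh_bsh, hmM, hsht, ← hθ'v] at h
      have hhead : ∑ i ∈ Finset.range M, (bsh m t i : ℝ)/2^(i+1)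
          = ∑ i ∈ Finset.range M, (t (i + m) : ℝ)/2^(i+1) := rfl
      rw [hhead] at h
      nth_rewrite 1 [h]
      rw [mul_add_div _ _ _ (ne_of_gt h2M)]
    have Fum : 2^M * bval (bsh r u)
        = 2^M * (∑ i ∈ Finset.range M, (t (i + m) : ℝ)/2^(i+1)) + bval u := by
      have h := bval_split (bsh r u) (fun k => hud _) M
      rw [bsh_bsh, hrM, hshu] at h
      have hhead : ∑ i ∈ Finset.range M, (bsh r u i : ℝ)/2^(i+1)
          = ∑ i ∈ Finset.range M, (t (i + m) : ℝ)/2^(i+1) := by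
        refine Finset.sum_congr rfl fun i hi => ?_
        have hiM := Finset.mem_range.mp hi
        show (u (i + r) : ℝ)/2^(i+1) = (t (i + m) : ℝ)/2^(i+1)
        rw [show i + r = p + (m + i) from by omega, hu2 (m + i) (by omega),
          show m + i = i + m from by omega]
      rw [hhead] at h
      nth_rewrite 1 [h]
      rw [mul_add_div _ _ _ (ne_of_gt h2M)]
    have hh := hθ'.2 m
    rw [hDt m] at hh
    simp only [Set.mem_Ioo, not_and_or, not_lt] at hh
    rcases hh with hle | hge
    · have PmL : 2^M * bval (bsh m t) ≤ 2^M * θ' :=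
        mul_le_mul_of_nonneg_left hle h2M.le
      have Pm1 : 2^M * bval u < 2^M * bval (bsh r u) :=
        mul_lt_mul_of_pos_left hm1 h2M
      have Pnn : 0 ≤ (2^M - 1) * (bval u - θ') :=
        mul_nonneg (by linarith) (by linarith)
      linarith [Ftm, Fum, PmL, Pm1, Pnn]
    · have PmG : 2^M * (1 - θ') ≤ 2^M * bval (bsh m t) :=
        mul_le_mul_of_nonneg_left hge h2M.le
      have Pm2 : 2^M * bval (bsh r u) < 2^M * (1 - bval u) :=
        mul_lt_mul_of_pos_left hm2 h2M
      have Pnn : 0 ≤ (2^M) * (bval u - θ') :=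
        mul_nonneg h2M.le (by linarith)
      linarith [Ftm, Fum, PmG, Pm2, Pnn, hθ'ξ]

end
end

section
/- Let θ ∈ 𝓡 ∩ (0, 1/2) be a primitive angle with D^p(θ) = θ (p ≥ 1), and pick δ > 0 such that D^k(θ) ∉ [θ, 1 − θ + 2δ] for all 0 < k < p. Let θ' ∈ 𝓡 be purely periodic with D^q(θ') = θ' (q ≥ 1) and θ − δ < θ' < θ. Write θ = Σ_{k≥1} s_k 2^{−k} and θ' = Σ_{k≥1} t_k 2^{−k} for their binary expansions (periodic with periods p and q respectively). Then for every m ≥ 1 the angle θ_m := Σ_{k≥1} u_k 2^{−k}, where (u_k) is periodic with period mp + q and its first mp + q values are given by m consecutive copies of the block s_1…s_p followed by the block t_1…t_q, belongs to 𝓡. -/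
open scoped Topology

noncomputable section

namespace ConcatAux

noncomputable def val (a : ℕ → ℕ) : ℝ := ∑' k : ℕ, (a k : ℝ) / 2 ^ (k + 1)

lemma summable_digits {a : ℕ → ℕ} (ha : ∀ k, a k ≤ 1) :
    Summable (fun k : ℕ => (a k : ℝ) / 2 ^ (k + 1)) := by
  refine Summable.of_nonneg_of_le (fun k => by positivity) (fun k => ?_) (summable_geometric_two' 1)
  have h1 : (a k : ℝ) ≤ 1 := by exact_mod_cast ha k
  have h2 : (1:ℝ)/2/2^k = 1/2^(k+1) := by
    rw [div_div, ← pow_succ']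
  rw [h2]
  gcongr

lemma val_nonneg (a : ℕ → ℕ) : 0 ≤ val a := tsum_nonneg fun k => by positivity

lemma val_split (a : ℕ → ℕ) (ha : ∀ k, a k ≤ 1) (N : ℕ) :
    val a = (∑ k ∈ Finset.range N, (a k : ℝ) / 2 ^ (k + 1))
      + (1/2) ^ N * val (fun k => a (k + N)) := by
  have hsum := summable_digits ha
  have h := Summable.sum_add_tsum_nat_add N hsum
  rw [val, ← h]
  congr 1
  rw [val, ← tsum_mul_left]
  apply tsum_congr
  intro k
  have h2 : (2:ℝ) ^ (k + N + 1) = 2 ^ N * 2 ^ (k + 1) := by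
    rw [← pow_add]; congr 1; omega
  have h3 : ((1:ℝ)/2) ^ N = (2 ^ N)⁻¹ := by
    rw [div_pow, one_pow, one_div]
  rw [h2, h3]
  have h4 : (2:ℝ)^N ≠ 0 := by positivity
  have h5 : (2:ℝ)^(k+1) ≠ 0 := by positivity
  field_simp

lemma val_le_one {a : ℕ → ℕ} (ha : ∀ k, a k ≤ 1) : val a ≤ 1 := by
  have h := tsum_geometric_two' 1
  rw [val, ← h]
  refine Summable.tsum_le_tsum (fun k => ?_) (summable_digits ha) (summable_geometric_two' 1)
  have h2 : (1:ℝ)/2/2^k = 1/2^(k+1) := by rw [div_div, ← pow_succ']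
  rw [h2]
  gcongr
  exact_mod_cast ha k

lemma val_le_half {a : ℕ → ℕ} (ha : ∀ k, a k ≤ 1) (h0 : a 0 = 0) : val a ≤ 1/2 := by
  have h := val_split a ha 1
  rw [Finset.sum_range_one, h0] at h
  have h2 : val (fun k => a (k + 1)) ≤ 1 := val_le_one (fun k => ha _)
  have h3 : 0 ≤ val (fun k => a (k + 1)) := val_nonneg _
  rw [h]
  norm_num
  linarith

lemma half_le_val {a : ℕ → ℕ} (ha : ∀ k, a k ≤ 1) (h0 : a 0 = 1) : 1/2 ≤ val a := by
  have h := val_split a ha 1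
  rw [Finset.sum_range_one, h0] at h
  have h2 : 0 ≤ val (fun k => a (k + 1)) := val_nonneg _
  rw [h]
  norm_num
  linarith

lemma val_lt_one {a : ℕ → ℕ} (ha : ∀ k, a k ≤ 1) (z : ℕ) (hz : a z = 0) : val a < 1 := by
  have hgeo : ∀ n : ℕ, ∑ k ∈ Finset.range n, ((1:ℝ)/2) ^ (k+1) = 1 - (1/2) ^ n := by
    intro n; induction n with
    | zero => simp
    | succ n ih => rw [Finset.sum_range_succ, ih]; ring
  have h1 := val_split a ha z
  have h2 : val (fun k => a (k + z)) ≤ 1/2 := by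
    refine val_le_half (fun k => ha _) ?_
    simpa using hz
  have h3 : (∑ k ∈ Finset.range z, (a k : ℝ) / 2 ^ (k + 1))
      ≤ ∑ k ∈ Finset.range z, ((1:ℝ)/2) ^ (k+1) := by
    refine Finset.sum_le_sum (fun k _ => ?_)
    have h4 : ((1:ℝ)/2) ^ (k+1) = 1 / 2 ^ (k+1) := by rw [div_pow, one_pow]
    rw [h4]
    gcongr
    exact_mod_cast ha k
  rw [hgeo] at h3
  have h4 : (0:ℝ) < (1/2) ^ z := by positivity
  have h5 : (1/2:ℝ) ^ z * val (fun k => a (k + z)) ≤ (1/2) ^ z * (1/2) :=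
    mul_le_mul_of_nonneg_left h2 (le_of_lt h4)
  rw [h1]
  nlinarith

lemma val_agree (a b : ℕ → ℕ) (ha : ∀ k, a k ≤ 1) (hb : ∀ k, b k ≤ 1) (N : ℕ)
    (h : ∀ k, k < N → a k = b k) :
    val a - val b = (1/2:ℝ) ^ N * (val (fun k => a (k + N)) - val (fun k => b (k + N))) := by
  rw [val_split a ha N, val_split b hb N]
  have heq : (∑ k ∈ Finset.range N, ((a k : ℝ) / 2 ^ (k + 1)))
      = ∑ k ∈ Finset.range N, ((b k : ℝ) / 2 ^ (k + 1)) :=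
    Finset.sum_congr rfl (fun k hk => by rw [h k (Finset.mem_range.1 hk)])
  rw [heq]; ring

lemma D_val {a : ℕ → ℕ} (ha : ∀ k, a k ≤ 1) (h1 : val (fun k => a (k + 1)) < 1) :
    D (val a) = val (fun k => a (k + 1)) := by
  have h := val_split a ha 1
  rw [Finset.sum_range_one] at h
  have hnn : 0 ≤ val (fun k => a (k + 1)) := val_nonneg _
  have h2 : 2 * val a = (a 0 : ℝ) + val (fun k => a (k + 1)) := by
    rw [h]; norm_num; ring
  rw [D, h2]
  rw [show ((a 0 : ℝ)) = ((a 0 : ℤ) : ℝ) by push_cast; ring]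
  rw [Int.fract_intCast_add]
  exact Int.fract_eq_self.2 ⟨hnn, h1⟩

lemma per_shift {a : ℕ → ℕ} {p : ℕ} (h : ∀ k, a (k + p) = a k) {N : ℕ} (hN : p ∣ N) :
    ∀ k, a (k + N) = a k := by
  obtain ⟨c, rfl⟩ := hN
  induction c with
  | zero => simp
  | succ c ih =>
    intro k
    have e : k + p * (c + 1) = (k + p * c) + p := by ring
    rw [e, h, ih]

lemma per_mod {a : ℕ → ℕ} {p : ℕ} (hp : 0 < p) (h : ∀ k, a (k + p) = a k) :
    ∀ j, a j = a (j % p) := by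
  intro j
  conv_lhs => rw [show j = j % p + p * (j / p) from by rw [Nat.mod_add_div]]
  exact per_shift h ⟨j / p, rfl⟩ _

lemma D_iter_val {a : ℕ → ℕ} (ha : ∀ k, a k ≤ 1) {p : ℕ} (hp : 0 < p)
    (hper : ∀ k, a (k + p) = a k) {z : ℕ} (hz : a z = 0) :
    ∀ n, D^[n] (val a) = val (fun k => a (k + n)) := by
  have hzero : ∀ n : ℕ, ∃ w, a (w + n) = 0 := by
    intro n
    refine ⟨z + n * p - n, ?_⟩
    have hle : n ≤ z + n * p := by
      calc n = n * 1 := (mul_one _).symm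
        _ ≤ n * p := Nat.mul_le_mul_left _ hp
        _ ≤ z + n * p := Nat.le_add_left _ _
    rw [Nat.sub_add_cancel hle]
    rw [per_shift hper (dvd_mul_left p n) z, hz]
  intro n
  induction n with
  | zero => simp [val]
  | succ n ih =>
    rw [Function.iterate_succ_apply', ih]
    have hb : ∀ k, a (k + n) ≤ 1 := fun k => ha _
    obtain ⟨w, hw⟩ := hzero (n + 1)
    have hlt : val (fun k => (fun j => a (j + n)) (k + 1)) < 1 := by
      refine val_lt_one (fun k => ha _) w ?_
      show a (w + 1 + n) = 0
      rw [show w + 1 + n = w + (n + 1) from by omega, hw]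
    have := D_val hb hlt
    rw [this]
    congr 1
    funext k
    show a (k + 1 + n) = a (k + (n + 1))
    congr 1
    omega

end ConcatAux

set_option maxHeartbeats 1600000 in
/-- concatenating `m` copies of the periodic block of a primitive angle
`θ` with the periodic block of a nearby purely periodic `θ' ∈ 𝓡` produces angles
`θ_m ∈ 𝓡` for every `m ≥ 1`. -/
theorem repeated_concatenation_in_R (θ θ' : ℝ) (p q : ℕ)
    (hθ : θ ∈ 𝓡 ∩ Set.Ioo 0 (1/2 : ℝ)) (hp : 1 ≤ p) (hper : D^[p] θ = θ)
    (hprim : ∀ k : ℕ, D^[k] θ ≠ 1 - θ)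
    (δ : ℝ) (hδ : 0 < δ) (hgap : ∀ k, 0 < k → k < p → D^[k] θ ∉ Set.Icc θ (1 - θ + 2 * δ))
    (hθ' : θ' ∈ 𝓡) (hq : 1 ≤ q) (hq' : D^[q] θ' = θ')
    (h1 : θ - δ < θ') (h2 : θ' < θ)
    (s t : ℕ → ℕ) (hs : IsBinExp θ s) (hsper : ∀ k, s (k + p) = s k)
    (ht : IsBinExp θ' t) (htper : ∀ k, t (k + q) = t k) :
    ∀ m : ℕ, 1 ≤ m → ∀ u : ℕ → ℕ,
      (∀ j, j < m * p → u j = s (j % p)) →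
      (∀ j, j < q → u (m * p + j) = t j) →
      (∀ k, u (k + (m * p + q)) = u k) →
      (∑' k : ℕ, (u k : ℝ) / 2 ^ (k+1)) ∈ 𝓡 := by
  intro m hm u hu1 hu2 hu3
  obtain ⟨hθR, hθI⟩ := hθ
  have hθpos : 0 < θ := hθI.1
  have hθhalf : θ < 1/2 := hθI.2
  obtain ⟨hs1, hs2, hs3⟩ := hs
  obtain ⟨ht1, ht2, ht3⟩ := ht
  have hsv : θ = ConcatAux.val s := hs3
  have htv : θ' = ConcatAux.val t := ht3
  have hp0 : 0 < p := hp
  have hq0 : 0 < q := hq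
  obtain ⟨X, hX⟩ : ∃ X, X = m * p := ⟨_, rfl⟩
  rw [← hX] at hu1 hu2 hu3
  have hX1 : 1 ≤ X := by rw [hX]; exact Nat.mul_pos hm hp
  have hPpos : 0 < X + q := by omega
  have hsmod : ∀ j, s j = s (j % p) := ConcatAux.per_mod hp0 hsper
  have humod : ∀ j, u j = u (j % (X + q)) := ConcatAux.per_mod hPpos hu3
  have hu3' : ∀ k, u (k + (X + q)) = u k := hu3
  have hu_le : ∀ j, u j ≤ 1 := by
    intro j
    rw [humod j]
    have hj : j % (X + q) < X + q := Nat.mod_lt _ hPpos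
    rcases lt_or_ge (j % (X + q)) X with h | h
    · rw [hu1 _ h]; exact hs1 _
    · obtain ⟨k, hk⟩ := Nat.le.dest h
      have hkq : k < q := by omega
      rw [← hk, hu2 k hkq]; exact ht1 _
  have hs0 : s 0 = 0 := by
    by_contra h
    have h1 : s 0 = 1 := by have := hs1 0; omega
    have := ConcatAux.half_le_val hs1 h1
    rw [← hsv] at this; linarith
  have ht0 : t 0 = 0 := by
    by_contra h
    have h1 : t 0 = 1 := by have := ht1 0; omega
    have := ConcatAux.half_le_val ht1 h1
    rw [← htv] at this; linarith
  have hu0 : u 0 = 0 := by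
    have h := hu1 0 (by omega)
    rw [h, Nat.zero_mod]; exact hs0
  have hDs : ∀ r : ℕ, D^[r] θ = ConcatAux.val (fun k => s (k + r)) := by
    intro r; rw [hsv]; exact ConcatAux.D_iter_val hs1 hp0 hsper hs0 r
  have hDt : ∀ j : ℕ, D^[j] θ' = ConcatAux.val (fun k => t (k + j)) := by
    intro j; rw [htv]; exact ConcatAux.D_iter_val ht1 hq0 htper ht0 j
  have hDu : ∀ n : ℕ, D^[n] (ConcatAux.val u) = ConcatAux.val (fun k => u (k + n)) :=
    ConcatAux.D_iter_val hu_le hPpos hu3 hu0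
  have hvnn : 0 ≤ ConcatAux.val u := ConcatAux.val_nonneg u
  have htail_s : (fun k => s (k + X)) = s := by
    funext k
    exact ConcatAux.per_shift hsper (by rw [hX]; exact dvd_mul_left p m) k
  have httail : (fun k => t (k + q)) = t := by funext k; exact htper k
  have key1 : ConcatAux.val u - θ
      = (1/2:ℝ)^X * (ConcatAux.val (fun k => u (k + X)) - θ) := by
    have hagree : ∀ k, k < X → u k = s k := by
      intro k hk
      rw [hu1 k hk, ← hsmod k]
    have h := ConcatAux.val_agree u s hu_le hs1 X hagree
    rw [htail_s, ← hsv] at h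
    exact h
  have key2 : ConcatAux.val (fun k => u (k + X)) - θ'
      = (1/2:ℝ)^q * (ConcatAux.val u - θ') := by
    have hagree : ∀ k, k < q → u (k + X) = t k := by
      intro k hk
      rw [show k + X = X + k from by omega, hu2 k hk]
    have h := ConcatAux.val_agree (fun k => u (k + X)) t (fun k => hu_le _) ht1 q hagree
    have e1 : (fun k => u (k + q + X)) = u := by
      funext k
      rw [show k + q + X = k + (X + q) from by omega]
      exact hu3' k
    rw [e1, httail, ← htv] at h
    exact h
  show ConcatAux.val u ∈ 𝓡
  generalize hvX : ConcatAux.val (fun k => u (k + X)) = vX at key1 key2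
  generalize hvu : ConcatAux.val u = vu at key1 key2 hDu hvnn ⊢
  have ha2 : (0:ℝ) < (1/2)^X := by positivity
  have hb2 : (0:ℝ) < (1/2)^q := by positivity
  have ha2' : ((1:ℝ)/2)^X ≤ 1/2 := by
    calc ((1:ℝ)/2)^X ≤ (1/2)^1 := pow_le_pow_of_le_one (by norm_num) (by norm_num) hX1
      _ = 1/2 := pow_one _
  have hb2' : ((1:ℝ)/2)^q ≤ 1/2 := by
    calc ((1:ℝ)/2)^q ≤ (1/2)^1 := pow_le_pow_of_le_one (by norm_num) (by norm_num) hq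
      _ = 1/2 := pow_one _
  have hG : 0 < θ - θ' := by linarith
  have hGδ : θ - θ' < δ := by linarith
  have hcomb : (vu - θ') * (1 - (1/2:ℝ)^X * (1/2)^q)
      = (θ - θ') * (1 - (1/2)^X) := by
    linear_combination key1 + (1/2:ℝ)^X * key2
  have hab : (1/2:ℝ)^X * (1/2)^q ≤ 1/2 * (1/2) :=
    mul_le_mul ha2' hb2' (le_of_lt hb2) (by norm_num)
  have hA : θ' < vu := by nlinarith [hcomb, hG, ha2', hab]
  have hB : vu < θ := by
    nlinarith [hcomb, mul_pos hG ha2, hab, hb2', hG, ha2]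
  have hVX1 : θ' < vX := by
    nlinarith [key2, mul_pos hb2 (sub_pos.2 hA)]
  have hVX2 : vX < θ := by
    nlinarith [key2, hA, hB, hb2, hb2']
  refine ⟨⟨hvnn, by linarith⟩, ?_⟩
  intro n
  rw [hDu n]
  obtain ⟨c, hc⟩ : ∃ c, n = n % (X + q) + (X + q) * c :=
    ⟨n / (X + q), (Nat.mod_add_div n (X + q)).symm⟩
  have hni : (fun k => u (k + n)) = (fun k => u (k + n % (X + q))) := by
    funext k
    have e : k + n = (k + n % (X + q)) + (X + q) * c := by
      nth_rewrite 1 [hc]; ring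
    rw [e]
    exact ConcatAux.per_shift hu3' ⟨c, rfl⟩ _
  have hilt : n % (X + q) < X + q := Nat.mod_lt _ hPpos
  generalize hgen : n % (X + q) = i at hni hilt
  rw [hni]
  rcases lt_or_ge i X with hiX | hiX
  · -- inside one of the m copies of the s-block
    obtain ⟨M, hM1, hM2⟩ : ∃ M, i + M = X ∧ 0 < M := ⟨X - i, by omega, by omega⟩
    have hr : i % p < p := Nat.mod_lt _ hp0
    have hagree : ∀ k, k < M → u (k + i) = s (k + i % p) := by
      intro k hk
      have hlt : k + i < X := by omega
      rw [hu1 _ hlt, hsmod (k + i % p)]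
      congr 1
      exact (Nat.ModEq.add_left k (Nat.mod_modEq i p)).symm
    have htail1 : (fun k => u (k + M + i)) = (fun k => u (k + X)) := by
      funext k; congr 1; omega
    have htail2 : (fun k => s (k + M + i % p)) = s := by
      funext k
      have hdvd : p ∣ (M + i % p) := by
        have hq1 : (M + i % p) % p = (M + i) % p := Nat.ModEq.add_left M (Nat.mod_modEq i p)
        have hq2 : (M + i) % p = 0 := by
          rw [show M + i = m * p from by rw [← hX]; omega]
          exact Nat.mul_mod_left m p
        exact Nat.dvd_of_mod_eq_zero (hq1.trans hq2)
      rw [show k + M + i % p = k + (M + i % p) from by omega]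
      exact ConcatAux.per_shift hsper hdvd k
    have hkey := ConcatAux.val_agree (fun k => u (k + i)) (fun k => s (k + i % p))
      (fun k => hu_le _) (fun k => hs1 _) M hagree
    rw [htail1, htail2, ← hsv, hvX] at hkey
    have hw := hDs (i % p)
    have hwcases : ConcatAux.val (fun k => s (k + i % p)) ≤ θ
        ∨ 1 - θ + 2*δ < ConcatAux.val (fun k => s (k + i % p)) := by
      rcases Nat.eq_zero_or_pos (i % p) with h0 | hpos
      · left
        have he : (fun k => s (k + i % p)) = s := by funext k; simp [h0]
        rw [he, ← hsv]
      · have hgap' := hgap (i % p) hpos hr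
        rw [hw] at hgap'
        simp only [Set.mem_Icc, not_and, not_le] at hgap'
        rcases le_or_gt θ (ConcatAux.val (fun k => s (k + i % p))) with hle | hlt
        · right; exact hgap' hle
        · left; exact hlt.le
    have hpM : (0:ℝ) < (1/2:ℝ)^M := by positivity
    have hpM1 : ((1:ℝ)/2)^M ≤ 1 := pow_le_one₀ (by norm_num) (by norm_num)
    have hpMX : ((1:ℝ)/2)^X ≤ (1/2)^M :=
      pow_le_pow_of_le_one (by norm_num) (by norm_num) (by omega)
    generalize hviv : ConcatAux.val (fun k => u (k + i)) = vi at hkey ⊢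
    generalize hwv : ConcatAux.val (fun k => s (k + i % p)) = w at hkey hwcases
    rcases hwcases with hlow | hhigh
    · have hfin : vi ≤ vu := by
        nlinarith [hkey, key1, hlow, hVX2,
          mul_nonneg (sub_nonneg.2 hpMX) (sub_nonneg.2 hVX2.le)]
      simp only [Set.mem_Ioo, not_and, not_lt]
      intro hcon
      linarith
    · have hfin : 1 - vu < vi := by
        nlinarith [hkey, hhigh, hVX1, hVX2, hB, hA, hGδ, hpM, hpM1,
          mul_nonneg (sub_nonneg.2 hpM1) (sub_nonneg.2 hVX2.le)]
      simp only [Set.mem_Ioo, not_and, not_lt]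
      intro hcon
      linarith
  · -- inside the t-block
    obtain ⟨j, hj⟩ := Nat.le.dest hiX
    have hjq : j < q := by omega
    obtain ⟨M, hM1, hM2⟩ : ∃ M, j + M = q ∧ 0 < M := ⟨q - j, by omega, by omega⟩
    have hagree : ∀ k, k < M → u (k + i) = t (k + j) := by
      intro k hk
      rw [show k + i = X + (j + k) from by omega, hu2 (j + k) (by omega)]
      congr 1
      omega
    have htail1 : (fun k => u (k + M + i)) = u := by
      funext k
      rw [show k + M + i = k + (X + q) from by omega]
      exact hu3' k
    have htail2 : (fun k => t (k + M + j)) = t := by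
      funext k
      rw [show k + M + j = k + q from by omega]
      exact htper k
    have hkey := ConcatAux.val_agree (fun k => u (k + i)) (fun k => t (k + j))
      (fun k => hu_le _) (fun k => ht1 _) M hagree
    rw [htail1, htail2, ← htv, hvu] at hkey
    have hw := hDt j
    have hjcases := hθ'.2 j
    rw [hw] at hjcases
    simp only [Set.mem_Ioo, not_and, not_lt] at hjcases
    have hpM : (0:ℝ) < (1/2:ℝ)^M := by positivity
    have hpM1 : ((1:ℝ)/2)^M ≤ 1 := pow_le_one₀ (by norm_num) (by norm_num)
    generalize hviv : ConcatAux.val (fun k => u (k + i)) = vi at hkey ⊢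
    generalize hwv : ConcatAux.val (fun k => t (k + j)) = w at hkey hjcases
    rcases le_or_gt w θ' with hle | hlt
    · have hfin : vi ≤ vu := by
        nlinarith [hkey, hle, hA, hpM,
          mul_nonneg (sub_nonneg.2 hpM1) (sub_nonneg.2 hA.le)]
      simp only [Set.mem_Ioo, not_and, not_lt]
      intro hcon
      linarith
    · have hge : 1 - θ' ≤ w := hjcases hlt
      have hfin : 1 - vu < vi := by
        nlinarith [hkey, hge, hA, mul_pos hpM (sub_pos.2 hA)]
      simp only [Set.mem_Ioo, not_and, not_lt]
      intro hcon
      linarith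


end
end

section
/- Let θ ∈ 𝓡 ∩ (0, 1/2) be a primitive angle. Then for every δ > 0 there exists a purely periodic angle θ' ∈ 𝓡 (i.e. D^q(θ') = θ' for some q ≥ 1) with θ − δ < θ' < θ. -/
open scoped Topology

noncomputable section

set_option maxHeartbeats 2000000

private lemma D_iter_fract (x : ℝ) : ∀ m : ℕ, D^[m] (Int.fract x) = Int.fract ((2:ℝ)^m * x)
  | 0 => by simp
  | (m+1) => by
      have h1 : D (Int.fract x) = Int.fract (2 * x) := by
        show Int.fract (2 * Int.fract x) = Int.fract (2 * x)
        have h2 : (2:ℝ) * Int.fract x = 2 * x - ((2 * ⌊x⌋ : ℤ) : ℝ) := by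
          rw [Int.fract]; push_cast; ring
        rw [h2, Int.fract_sub_intCast]
      rw [Function.iterate_succ_apply, h1, ← Int.fract_fract, Int.fract_fract,
        D_iter_fract (2*x) m]
      congr 1; ring

/-- every primitive angle can be approximated from below by purely
periodic angles in `𝓡`. -/
theorem primitive_approx_from_below (θ : ℝ) (hθ : θ ∈ 𝓡 ∩ Set.Ioo 0 (1/2 : ℝ))
    (p : ℕ) (hp : 1 ≤ p) (hper : D^[p] θ = θ) (hprim : ∀ k : ℕ, D^[k] θ ≠ 1 - θ)
    (δ : ℝ) (hδ : 0 < δ) :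
    ∃ θ' ∈ 𝓡, (∃ q : ℕ, 1 ≤ q ∧ D^[q] θ' = θ') ∧ θ - δ < θ' ∧ θ' < θ := by
  obtain ⟨⟨hIcc, horb⟩, hθI⟩ := hθ
  have hθpos : 0 < θ := hθI.1
  have hθhalf : θ < 1/2 := hθI.2
  have hfθ : Int.fract θ = θ := Int.fract_eq_self.mpr ⟨le_of_lt hθpos, by linarith⟩
  set x : ℕ → ℝ := fun j => Int.fract ((2:ℝ)^j * θ) with hxdef
  set b : ℕ → ℤ := fun j => ⌊(2:ℝ)^j * θ⌋ with hbdef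
  have hxb : ∀ j : ℕ, x j = 2^j * θ - b j := fun j => rfl
  have hxit : ∀ m : ℕ, D^[m] θ = x m := by
    intro m
    have h := D_iter_fract θ m
    rw [hfθ] at h
    exact h
  have hx0 : ∀ j, 0 ≤ x j := fun j => Int.fract_nonneg _
  have hx1 : ∀ j, x j < 1 := fun j => Int.fract_lt_one _
  have hxper : ∀ j, x (j + p) = x j := by
    intro j
    rw [← hxit, ← hxit, Function.iterate_add_apply, hper]
  have hxmod : ∀ m, x (m % p) = x m := fun m => Function.Periodic.map_mod_nat hxper m
  have hx0v : x 0 = θ := by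
    show Int.fract ((2:ℝ)^0 * θ) = θ
    rw [pow_zero, one_mul, hfθ]
  have hside : ∀ m, x m ≤ θ ∨ 1 - θ < x m := by
    intro m
    rcases le_or_gt (x m) θ with h | h
    · exact Or.inl h
    · right
      have h1 := horb m; rw [hxit m] at h1
      have h2 := hprim m; rw [hxit m] at h2
      rcases lt_trichotomy (x m) (1-θ) with h3 | h3 | h3
      · exact absurd (Set.mem_Ioo.mpr ⟨h, h3⟩) h1
      · exact absurd h3 h2
      · exact h3
  have hp2 : 2 ≤ p := by
    rcases Nat.lt_or_ge p 2 with h | h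
    · exfalso
      have hp1 : p = 1 := by omega
      rw [hp1] at hper
      have : D θ = θ := by simpa using hper
      have h2 : D θ = 2*θ := by
        show Int.fract (2*θ) = 2*θ
        exact Int.fract_eq_self.mpr ⟨by linarith, by linarith⟩
      rw [h2] at this; linarith
    · exact h
  have hx1v : x 1 = 2*θ := by
    show Int.fract ((2:ℝ)^1 * θ) = 2*θ
    rw [pow_one]
    exact Int.fract_eq_self.mpr ⟨by linarith, by linarith⟩
  have hS : (1:ℕ) ∈ (Finset.range p).filter (fun j => 1 - θ < x j) := by
    refine Finset.mem_filter.mpr ⟨Finset.mem_range.mpr (by omega), ?_⟩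
    rcases hside 1 with h | h
    · rw [hx1v] at h; exfalso; linarith
    · exact h
  obtain ⟨k, hkmem, hkmin⟩ := Finset.exists_min_image _ x ⟨1, hS⟩
  have hk1θ : 1 - θ < x k := (Finset.mem_filter.mp hkmem).2
  set γ : ℝ := x k - (1 - θ) with hγdef
  clear_value γ
  have hγpos : 0 < γ := by rw [hγdef]; linarith
  have hγθ : γ < θ := by have := hx1 k; rw [hγdef]; linarith
  have hmin : ∀ m, 1 - θ < x m → 1 - θ + γ ≤ x m := by
    intro m hm
    have h1 : m % p ∈ (Finset.range p).filter (fun j => 1 - θ < x j) := by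
      refine Finset.mem_filter.mpr ⟨Finset.mem_range.mpr (Nat.mod_lt m (by omega)), ?_⟩
      rw [hxmod]; exact hm
    have h2 := hkmin _ h1
    rw [hxmod] at h2
    rw [hγdef]; linarith
  have hA : ((2:ℝ)^p - 1) * θ = (b p : ℝ) := by
    have h1 : x p = θ := by
      have := hxper 0; simpa [hx0v] using this
    have h2 := hxb p
    rw [h1] at h2
    linarith
  have hP4 : (4:ℝ) ≤ 2^p := by
    calc (4:ℝ) = 2^2 := by norm_num
    _ ≤ 2^p := pow_le_pow_right₀ one_le_two hp2
  set c : ℝ := γ * (2^p - 1) with hcdef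
  clear_value c
  have hcpos : 0 < c := by rw [hcdef]; exact mul_pos hγpos (by linarith)
  obtain ⟨C, hC⟩ : ∃ C : ℤ, (C:ℝ) = c := by
    refine ⟨b p + 2^k * b p - (2^p - 1) * b k - (2^p - 1), ?_⟩
    have h1 := hxb k
    rw [hcdef, hγdef]
    push_cast
    linear_combination (-(2:ℝ)^k - 1) * hA - ((2:ℝ)^p - 1) * h1
  -- choice of n
  obtain ⟨n₀, hn₀⟩ := exists_nat_gt (c / δ)
  set n : ℕ := n₀ + 1 with hndef
  set q : ℕ := (n + 1) * p with hqdef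
  have hpq : p ∣ q := ⟨n+1, by rw [hqdef, Nat.mul_comm]⟩
  have hq2p : p*2 ≤ q := by
    rw [hqdef, Nat.mul_comm]; exact Nat.mul_le_mul_right p (by omega)
  have hqpos : 0 < q := by omega
  set N : ℝ := 2^q - 1 with hNdef
  clear_value N
  have hq2 : (2:ℝ)^(p*2) ≤ 2^q := pow_le_pow_right₀ one_le_two hq2p
  have hNP : ((2:ℝ)^p)^2 - 1 ≤ N := by
    rw [hNdef, ← pow_mul]
    linarith
  have hNpos : 0 < N := by nlinarith [hNP, hP4, sq_nonneg ((2:ℝ)^p - 1)]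
  have hN1 : N + 1 = (2:ℝ)^q := by rw [hNdef]; ring
  have hcN : c / N ≤ γ / 2 := by
    rw [div_le_div_iff₀ hNpos two_pos, hcdef]
    nlinarith [hγpos.le, hNP, hP4, sq_nonneg ((2:ℝ)^p - 1), mul_le_mul_of_nonneg_left hNP hγpos.le]
  have hcNpos : 0 < c / N := div_pos hcpos hNpos
  have hcNδ : c / N < δ := by
    have hqn : (q:ℝ) ≤ N := by
      have h1 : q + 1 ≤ 2^q := Nat.lt_two_pow_self (n := q)
      have h2 : ((q:ℕ):ℝ) + 1 ≤ ((2^q : ℕ):ℝ) := by exact_mod_cast h1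
      push_cast at h2
      rw [hNdef]; linarith
    have hqn2 : (n₀:ℝ) < (q:ℝ) := by
      have : n₀ + 2 ≤ q := by
        calc n₀ + 2 = (n+1) * 1 := by omega
        _ ≤ (n+1) * p := Nat.mul_le_mul_left _ (by omega)
      have h4 : n₀ < q := by omega
      exact_mod_cast h4
    have hNcδ : c / δ < N := by linarith
    rw [div_lt_iff₀ hNpos]
    rw [div_lt_iff₀ hδ] at hNcδ
    linarith
  set θ' : ℝ := θ - c / N with hθ'def
  clear_value θ'
  have hθ'pos : 0 < θ' := by rw [hθ'def]; linarith
  have hθ'θ : θ' < θ := by rw [hθ'def]; linarith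
  have hfθ' : Int.fract θ' = θ' := Int.fract_eq_self.mpr ⟨le_of_lt hθ'pos, by rw [hθ'def]; linarith⟩
  -- the key reduction
  have key : ∀ m : ℕ, Int.fract ((2:ℝ)^m * θ') = Int.fract (x (m % p) - c * 2^(m % q) / N) := by
    intro m
    obtain ⟨G, hG⟩ : ((2:ℤ)^q - 1) ∣ ((2:ℤ)^q)^(m / q) - 1 := by
      simpa using sub_dvd_pow_sub_pow ((2:ℤ)^q) 1 (m/q)
    have hGR : (2:ℝ)^(q*(m/q)) = N * (G:ℝ) + 1 := by
      have h := congrArg (fun z : ℤ => (z:ℝ)) hG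
      push_cast at h
      rw [pow_mul, hNdef]
      linarith
    have hsplit : (2:ℝ)^(q*(m/q)) * 2^(m % q) = 2^m := by
      rw [← pow_add, Nat.div_add_mod]
    rw [Int.fract_eq_fract]
    refine ⟨b m - C * 2^(m % q) * G, ?_⟩
    have hxm : x (m % p) = 2^m * θ - b m := by rw [hxmod]; exact hxb m
    have hNe : N ≠ 0 := ne_of_gt hNpos
    rw [hxm, ← hsplit, hGR, hθ'def, ← hC]
    push_cast
    field_simp
    ring
  -- helper
  have goal2 : ∀ y : ℝ, y ≤ θ' ∨ 1 - θ' ≤ y → y ∉ Set.Ioo θ' (1-θ') := by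
    intro y hy hmem
    rcases hy with h | h
    · exact absurd hmem.1 (not_lt.mpr h)
    · exact absurd hmem.2 (not_lt.mpr h)
  -- main estimate
  have hstep : ∀ r : ℕ, r < q → Int.fract (x (r % p) - c * 2^r / N) ∉ Set.Ioo θ' (1 - θ') := by
    intro r hr
    have hxr0 := hx0 (r % p)
    have hxr1 := hx1 (r % p)
    rcases lt_or_ge (r + p) q with hAc | hBc
    · -- regime A : small perturbation
      have hpow : (2:ℝ)^r * 2^(p+1) ≤ 2^q := by
        rw [← pow_add]; exact pow_le_pow_right₀ one_le_two (by omega)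
      set τ : ℝ := c * 2^r / N with hτdef
      clear_value τ
      have h2r1 : (1:ℝ) ≤ 2^r := one_le_pow₀ one_le_two
      have hτpos : 0 < τ := by
        rw [hτdef]; positivity
      have hτc : c / N ≤ τ := by
        rw [hτdef]
        exact (div_le_div_iff_of_pos_right hNpos).mpr (le_mul_of_one_le_right hcpos.le h2r1)
      have hτγ : τ + c / N ≤ γ := by
        have hps : (2:ℝ)^(p+1) = 2^p * 2 := pow_succ 2 p
        rw [hps] at hpow
        have h2 : c * 2^r + c ≤ γ * N := by
          rw [hcdef, hNdef]
          nlinarith [hγpos.le, pow_pos (zero_lt_two (α := ℝ)) r, pow_pos (zero_lt_two (α := ℝ)) p,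
            mul_le_mul_of_nonneg_left hpow hγpos.le,
            mul_le_mul_of_nonneg_left h2r1 (mul_nonneg hγpos.le (pow_pos (zero_lt_two (α := ℝ)) p).le)]
        rw [hτdef, ← add_div, div_le_iff₀ hNpos]
        nlinarith [hγpos.le, hNpos.le]
      have hτ1 : τ < 1 := by linarith
      rcases le_or_gt τ (x (r % p)) with hwr | hwr
      · have hy : Int.fract (x (r % p) - τ) = x (r % p) - τ :=
          Int.fract_eq_self.mpr ⟨by linarith, by linarith⟩
        rw [hy]
        rcases hside (r % p) with h | h
        · exact goal2 _ (Or.inl (by rw [hθ'def]; linarith))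
        · exact goal2 _ (Or.inr (by rw [hθ'def]; linarith [hmin _ h]))
      · have h1 : Int.fract (x (r % p) - τ) = Int.fract (x (r % p) - τ + 1) := by
          rw [show x (r % p) - τ + 1 = x (r % p) - τ + ((1:ℤ):ℝ) by push_cast; ring,
            Int.fract_add_intCast]
        have hy : Int.fract (x (r % p) - τ) = x (r % p) - τ + 1 := by
          rw [h1]
          exact Int.fract_eq_self.mpr ⟨by linarith, by linarith⟩
        rw [hy]
        exact goal2 _ (Or.inr (by rw [hθ'def]; linarith))
    · -- regime B : shift lands in the modified block
      obtain ⟨t, ht, hteq⟩ : ∃ t, t < p ∧ r + p = q + t := ⟨r + p - q, by omega, by omega⟩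
      have hqP : q = p * n + p := by rw [hqdef]; ring
      have hrval : r = p * n + t := by
        have h1 : r + p = (p * n + t) + p := by rw [hteq, hqP]; ring
        omega
      have hjt : r % p = t := by
        rw [hrval, Nat.mul_add_mod, Nat.mod_eq_of_lt ht]
      have hpowid : (2:ℝ)^r * 2^p = 2^q * 2^t := by
        rw [← pow_add, ← pow_add, hteq]
      have hPpos : (0:ℝ) < 2^p := by positivity
      have hPe : ((2:ℝ)^p) ≠ 0 := ne_of_gt hPpos
      have hNe : N ≠ 0 := ne_of_gt hNpos
      have hT1 : (1:ℝ) ≤ 2^t := one_le_pow₀ one_le_two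
      have hT2 : (2:ℝ)^t * 2 ≤ 2^p := by
        rw [← pow_succ]
        exact pow_le_pow_right₀ one_le_two (by omega)
      have hsplit : c * 2^r / N = c * 2^t / 2^p + c * 2^t / (2^p * N) := by
        have h2r : (2:ℝ)^r = 2^q * 2^t / 2^p := by
          rw [eq_div_iff hPe]; exact hpowid
        rw [h2r, ← hN1]
        field_simp
      set e : ℝ := c * 2^t / (2^p * N) with hedef
      clear_value e
      set w : ℝ := γ * 2^t / 2^p - e with hwdef
      clear_value w
      set R : ℝ := 1 - x (t + k) + γ * 2^t / 2^p - e with hRdef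
      clear_value R
      have hKint : Int.fract (x t - c * 2^r / N) = Int.fract R := by
        rw [Int.fract_eq_fract]
        refine ⟨2^t * b k - b (t + k) - b t + 2^t - 1, ?_⟩
        have h1 := hxb t
        have h2 := hxb (t+k)
        have h3 := hxb k
        have h4 : (2:ℝ)^(t+k) = 2^t * 2^k := pow_add 2 t k
        rw [hsplit, hRdef, hedef, h1, h2, hcdef, hγdef, h3, h4]
        push_cast
        field_simp
        ring
      have hRw : R = 1 - x (t + k) + w := by rw [hRdef, hwdef, hedef]; ring
      have hkey1 : c * 2^p ≤ γ * N - c := by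
        have h1 : γ * (((2:ℝ)^p)^2 - 1) ≤ γ * N := mul_le_mul_of_nonneg_left hNP hγpos.le
        rw [hcdef]
        nlinarith
      have hepos : 0 < e := by rw [hedef]; positivity
      have hwval : w = 2^t * (γ * N - c) / (2^p * N) := by
        rw [hwdef, hedef]
        field_simp
      have hwpos : 0 < w := by
        rw [hwval]
        apply div_pos _ (mul_pos hPpos hNpos)
        apply mul_pos (by positivity)
        nlinarith
      have hwhalf : w ≤ γ / 2 := by
        have h1 : γ * 2^t / 2^p ≤ γ / 2 := by
          rw [div_le_div_iff₀ hPpos two_pos]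
          have h2 := mul_le_mul_of_nonneg_left hT2 hγpos.le
          linarith
        rw [hwdef]; linarith
      have hwcN : c / N ≤ w := by
        rw [hwval, div_le_div_iff₀ hNpos (mul_pos hPpos hNpos)]
        have h8 : c * 2^p * N ≤ (γ * N - c) * N := mul_le_mul_of_nonneg_right hkey1 hNpos.le
        have hcp : 0 ≤ c * 2^p := (mul_pos hcpos hPpos).le
        have h9 : 0 ≤ (γ * N - c) * N := mul_nonneg (by linarith) hNpos.le
        have h10 : (γ * N - c) * N ≤ 2^t * ((γ * N - c) * N) := le_mul_of_one_le_left h9 hT1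
        linarith [h8, h10]
      have hxtk0 := hx0 (t+k)
      have hxtk1 := hx1 (t+k)
      rw [hjt, hKint]
      rcases le_or_gt (x (t+k)) w with hc1 | hc1
      · have h5 : Int.fract R = R - 1 := by
          have h1' : Int.fract R = Int.fract (R - 1) := by
            rw [show R - 1 = R - ((1:ℤ):ℝ) by push_cast; ring, Int.fract_sub_intCast]
          rw [h1']
          exact Int.fract_eq_self.mpr ⟨by rw [hRw]; linarith,
            by rw [hRw]; linarith [hwhalf, hγθ, hθhalf, hx0 (t+k)]⟩
        rw [h5]
        refine goal2 _ (Or.inl ?_)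
        rw [hRw, hθ'def]
        linarith
      · have h5 : Int.fract R = R := by
          refine Int.fract_eq_self.mpr ⟨by rw [hRw]; linarith, by rw [hRw]; linarith⟩
        rw [h5]
        rcases hside (t+k) with h6 | h6
        · refine goal2 _ (Or.inr ?_)
          rw [hRw, hθ'def]
          linarith
        · refine goal2 _ (Or.inl ?_)
          have h7 := hmin (t+k) h6
          rw [hRw, hθ'def]
          linarith
  -- assembling
  have horb' : ∀ m : ℕ, D^[m] θ' ∉ Set.Ioo θ' (1 - θ') := by
    intro m
    have h1 : D^[m] θ' = Int.fract ((2:ℝ)^m * θ') := by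
      conv_lhs => rw [← hfθ']
      exact D_iter_fract θ' m
    rw [h1, key m]
    have h2 : (m % q) % p = m % p := Nat.mod_mod_of_dvd m hpq
    rw [← h2]
    exact hstep (m % q) (Nat.mod_lt m hqpos)
  have hper' : D^[q] θ' = θ' := by
    have h1 : D^[q] θ' = Int.fract ((2:ℝ)^q * θ') := by
      conv_lhs => rw [← hfθ']
      exact D_iter_fract θ' q
    rw [h1, key q]
    have h2 : q % q = 0 := Nat.mod_self q
    have h3 : q % p = 0 := by
      obtain ⟨s, hs⟩ := hpq
      rw [hs, Nat.mul_mod_right]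
    rw [h2, h3, hx0v, pow_zero]
    have h4 : θ - c * 1 / N = θ' := by rw [hθ'def]; ring
    rw [h4, hfθ']
  refine ⟨θ', ⟨⟨le_of_lt hθ'pos, by rw [hθ'def]; linarith⟩, horb'⟩, ⟨q, by omega, hper'⟩, ?_, hθ'θ⟩
  rw [hθ'def]; linarith

end
end
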